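/- arXiv:2502.07285 — 7 statements merged into one kernel-verified Lean document; each statement's English description precedes it below -/
import Mathlib

section
/- Let K be an N×N Hermitian complex matrix. There exists a determinantal point process on the finite set X = {1,...,N} with kernel matrix K (i.e., a random subset S of X such that P(A ⊆ S) = det(K_A) for every subset A of X) if and only if all eigenvalues of K lie in the interval [0,1], i.e., 0 ≼ K ≼ I in the positive-semidefinite order. -/
/-!
Let `M_T` be the matrix whose rows indexed by `T` are those of `K` and whose other rows are those
of `1 - K`. `det K_A` is the determinant of the matrix with the rows of `K` in `A` and those of `1`
elsewhere; writing each row of `1` as a row of `K` plus a row of `1 - K` and expanding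
multilinearly gives `det K_A = ∑_{T ⊇ A} det M_T`. By Möbius inversion a DPP with kernel `K`
must therefore have `P(S = T) = det M_T`.

If `0 < K < 1`, a Schur complement gives
`det M_T = det K_TT * det ((1 - K)_{T'T'} + K_{T'T} K_TT⁻¹ K_{TT'}) > 0` (`T' = Tᶜ`), and by
continuity `det M_T ≥ 0` when `0 ≤ K ≤ 1`; these numbers define the DPP.
Conversely, the principal minors of `K` are the probabilities `P(A ⊆ S)` and, since `M_T` for
`1 - K` is `M_{Tᶜ}` for `K`, those of `1 - K` are the probabilities `P(A ∩ S = ∅)`. A Hermitian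
matrix with nonnegative principal minors is positive semidefinite, because
`det (1 + x M) = ∑_s x ^ |s| det M_s ≥ 1` for `x ≥ 0` rules out a negative eigenvalue `-1 / x`.
-/

open scoped Classical ComplexOrder

noncomputable def dppSubmatrix {N : ℕ} (K : Matrix (Fin N) (Fin N) ℂ) (A : Finset (Fin N)) :
    Matrix A A ℂ :=
  K.submatrix (fun i : A => (i : Fin N)) (fun j : A => (j : Fin N))

open Matrix Finset

theorem Finset.sum_Ici_injective {α 𝕜 : Type*} [PartialOrder α] [OrderTop α]
    [LocallyFiniteOrder α] [DecidableEq α] [Ring 𝕜] :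
    Function.Injective fun (f : α → 𝕜) (x : α) => ∑ y ∈ Ici x, f y := by
  intro f g h
  funext x
  exact (IncidenceAlgebra.moebius_inversion_top f _ (fun y => (congrFun h y).symm) x).trans
    (IncidenceAlgebra.moebius_inversion_top g _ (fun _ => rfl) x).symm

section AtomMatrix

variable {n R : Type*} [DecidableEq n] [CommRing R]

/-- The matrix `M_T`, whose determinant is `P(S = T)`, i.e. `(-1) ^ #Tᶜ * det (K - 1_{Tᶜ})` in the
usual notation. -/
def dppAtomMatrix (K : Matrix n n R) (T : Finset n) : Matrix n n R :=
  of (T.piecewise K.row (1 - K).row)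

theorem continuous_dppAtomMatrix [TopologicalSpace R] [IsTopologicalRing R] (T : Finset n) :
    Continuous fun K : Matrix n n R => dppAtomMatrix K T := by
  refine continuous_matrix fun i j => ?_
  by_cases hi : i ∈ T <;>
    simp only [dppAtomMatrix, of_apply, Finset.piecewise, hi, if_true, if_false, row] <;>
    fun_prop

variable [Fintype n]

theorem dppAtomMatrix_one_sub (K : Matrix n n R) (T : Finset n) :
    dppAtomMatrix (1 - K) T = dppAtomMatrix K Tᶜ := by
  ext i j
  by_cases hi : i ∈ T <;> simp [dppAtomMatrix, Finset.piecewise, hi]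

theorem Matrix.det_of_add_eq_sum_det_piecewise (f g : n → n → R) :
    (of (f + g)).det = ∑ s : Finset n, (of (s.piecewise f g)).det :=
  detRowAlternating.toMultilinearMap.map_add_univ f g

theorem sum_Ici_det_dppAtomMatrix (K : Matrix n n R) (A : Finset n) :
    ∑ T ∈ Ici A, (dppAtomMatrix K T).det = (K.submatrix (↑) (↑) : Matrix A A R).det := by
  have hrows : A.piecewise K.row (1 : Matrix n n R).row
      = K.row + A.piecewise (0 : Matrix n n R).row (1 - K).row := by
    ext i j
    by_cases hi : i ∈ A <;> simp [Finset.piecewise, hi]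
  rw [← det_piecewise_one_eq_submatrix_det, hrows, det_of_add_eq_sum_det_piecewise,
    ← sum_filter_add_sum_filter_not univ (A ≤ ·), filter_le_eq_Ici]
  have hvanish : ∀ T ∈ univ.filter (¬A ≤ ·),
      (of (T.piecewise K.row (A.piecewise (0 : Matrix n n R).row (1 - K).row))).det = 0 := by
    intro T hT
    obtain ⟨i, hiA, hiT⟩ := not_subset.mp (mem_filter.mp hT).2
    refine detRowAlternating.toMultilinearMap.map_coord_zero i ?_
    show T.piecewise K.row (A.piecewise (0 : Matrix n n R).row (1 - K).row) i = 0
    rw [piecewise_eq_of_notMem _ _ _ hiT, piecewise_eq_of_mem _ _ _ hiA]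
    rfl
  rw [sum_eq_zero hvanish, add_zero]
  refine sum_congr rfl fun T hT => ?_
  rw [piecewise_piecewise_of_subset_right (mem_Ici.mp hT)]
  rfl

theorem Matrix.det_one_add_smul_eq_sum_minors (x : R) (M : Matrix n n R) :
    (1 + x • M).det = ∑ s : Finset n, x ^ #s * (M.submatrix (↑) (↑) : Matrix s s R).det := by
  rw [add_comm, show x • M + 1 = of ((x • M).row + (1 : Matrix n n R).row) from rfl,
    det_of_add_eq_sum_det_piecewise]
  refine sum_congr rfl fun s _ => ?_
  have hrows : s.piecewise (x • M).row (1 : Matrix n n R).row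
      = fun i => (if i ∈ s then x else 1) • s.piecewise M.row (1 : Matrix n n R).row i := by
    ext i j
    by_cases hi : i ∈ s <;> simp [Finset.piecewise, hi]
  rw [← det_piecewise_one_eq_submatrix_det, hrows]
  refine (detRowAlternating.toMultilinearMap.map_smul_univ _ _).trans ?_
  rw [prod_ite_mem, univ_inter, prod_const, smul_eq_mul]
  rfl

end AtomMatrix

section RCLike

variable {n 𝕜 : Type*} [Fintype n] [DecidableEq n] [RCLike 𝕜]

theorem Matrix.IsHermitian.posSemidef_of_minors_nonneg {M : Matrix n n 𝕜} (hM : M.IsHermitian)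
    (h : ∀ s : Finset n, 0 ≤ (M.submatrix (↑) (↑) : Matrix s s 𝕜).det) : M.PosSemidef := by
  refine hM.posSemidef_iff_eigenvalues_nonneg.mpr fun i => ?_
  by_contra! hneg
  set c : 𝕜 := ((-(hM.eigenvalues i)⁻¹ : ℝ) : 𝕜)
  have hdet_pos : 0 < (1 + c • M).det := by
    have hc : 0 ≤ c := RCLike.ofReal_nonneg.mpr (by simpa using hneg.le)
    rw [det_one_add_smul_eq_sum_minors]
    exact sum_pos' (fun s _ => mul_nonneg (pow_nonneg hc _) (h s)) ⟨∅, mem_univ _, by simp⟩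
  have hdet_zero : (1 + c • M).det = 0 := by
    refine exists_mulVec_eq_zero_iff.mp ⟨(hM.eigenvectorBasis i).ofLp, ?_, ?_⟩
    · simpa using hM.eigenvectorBasis.orthonormal.ne_zero i
    · have hc_eig : c * hM.eigenvalues i = -1 := by
        rw [← RCLike.ofReal_mul, neg_mul, inv_mul_cancel₀ hneg.ne]
        simp
      rw [add_mulVec, one_mulVec, smul_mulVec, hM.mulVec_eigenvectorBasis,
        RCLike.real_smul_eq_coe_smul (K := 𝕜), smul_smul, hc_eig, neg_one_smul, add_neg_cancel]
  exact hdet_pos.ne' hdet_zero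

theorem det_dppAtomMatrix_pos {P : Matrix n n 𝕜} (hP : P.PosDef) (hP1 : (1 - P).PosDef)
    (T : Finset n) : 0 < (dppAtomMatrix P T).det := by
  let A : Matrix T T 𝕜 := P.submatrix (↑) (↑)
  let B : Matrix T {i // i ∉ T} 𝕜 := P.submatrix (↑) (↑)
  let D : Matrix {i // i ∉ T} {i // i ∉ T} 𝕜 := (1 - P).submatrix (↑) (↑)
  have hA : A.PosDef := hP.submatrix Subtype.val_injective
  have : Invertible A := hA.isUnit.invertible
  have hblocks : (dppAtomMatrix P T).submatrix (Equiv.sumCompl (· ∈ T)) (Equiv.sumCompl (· ∈ T))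
      = fromBlocks A B (-Bᴴ) D := by
    ext (⟨i, hi⟩ | ⟨i, hi⟩) (⟨j, hj⟩ | ⟨j, hj⟩)
    all_goals simp only [dppAtomMatrix, A, B, D, submatrix_apply, Equiv.sumCompl_apply_inl,
      Equiv.sumCompl_apply_inr, of_apply, piecewise, hi, if_true, if_false, row_apply,
      conjTranspose_submatrix, fromBlocks_apply₁₁, fromBlocks_apply₁₂, fromBlocks_apply₂₁,
      fromBlocks_apply₂₂, Matrix.neg_apply, conjTranspose_apply, hP.isHermitian.apply]
    rw [Matrix.sub_apply, one_apply_ne (by rintro rfl; exact hi hj), zero_sub]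
  have hschur : (D + Bᴴ * A⁻¹ * B).PosDef :=
    (hP1.submatrix Subtype.val_injective).add_posSemidef
      (hA.inv.posSemidef.conjTranspose_mul_mul_same B)
  rw [← det_submatrix_equiv_self (Equiv.sumCompl (· ∈ T)), hblocks, det_fromBlocks₁₁,
    invOf_eq_nonsing_inv, Matrix.neg_mul, Matrix.neg_mul, sub_neg_eq_add]
  exact mul_pos hA.det_pos hschur.det_pos

open Filter Topology in
theorem det_dppAtomMatrix_nonneg {K : Matrix n n 𝕜} (hK : K.PosSemidef)
    (hK1 : (1 - K).PosSemidef) (T : Finset n) : 0 ≤ (dppAtomMatrix K T).det := by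
  let Kt : ℝ → Matrix n n 𝕜 := fun t => (1 - t) • K + (t / 2) • 1
  have hpos : ∀ t ∈ Set.Ioo (0 : ℝ) 1, 0 < (dppAtomMatrix (Kt t) T).det := by
    rintro t ⟨ht0, ht1⟩
    have hsub : 1 - Kt t = (1 - t) • (1 - K) + (t / 2) • 1 := by
      simp only [Kt]
      module
    refine det_dppAtomMatrix_pos ?_ ?_ T
    · exact PosDef.posSemidef_add (hK.smul (sub_nonneg.2 ht1.le)) (PosDef.one.smul (half_pos ht0))
    · rw [hsub]
      exact PosDef.posSemidef_add (hK1.smul (sub_nonneg.2 ht1.le)) (PosDef.one.smul (half_pos ht0))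
  have hcont : Continuous fun t => (dppAtomMatrix (Kt t) T).det :=
    ((continuous_dppAtomMatrix T).comp (by fun_prop)).matrix_det
  have hlim : Tendsto (fun t => (dppAtomMatrix (Kt t) T).det) (𝓝[>] 0)
      (𝓝 (dppAtomMatrix K T).det) := by
    simpa [Kt] using (hcont.continuousWithinAt (x := 0) (s := Set.Ioi 0)).tendsto
  exact ge_of_tendsto hlim (eventually_of_mem (Ioo_mem_nhdsGT one_pos) fun t ht => (hpos t ht).le)

theorem Matrix.IsHermitian.posSemidef_and_one_sub_of_dpp {K : Matrix n n 𝕜} (hK : K.IsHermitian)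
    {μ : Finset n → ℝ} (hμ_nonneg : ∀ T, 0 ≤ μ T)
    (hμ : ∀ A, ∑ T ∈ Ici A, (μ T : 𝕜) = (K.submatrix (↑) (↑) : Matrix A A 𝕜).det) :
    K.PosSemidef ∧ (1 - K).PosSemidef := by
  have hatom : (fun T => (dppAtomMatrix K T).det) = fun T => (μ T : 𝕜) :=
    sum_Ici_injective <| funext fun A => (sum_Ici_det_dppAtomMatrix K A).trans (hμ A).symm
  have hsum_nonneg (f : Finset n → Finset n) (A : Finset n) : 0 ≤ ∑ T ∈ Ici A, (μ (f T) : 𝕜) :=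
    sum_nonneg fun T _ => RCLike.ofReal_nonneg.mpr (hμ_nonneg (f T))
  refine ⟨hK.posSemidef_of_minors_nonneg fun A => ?_,
    (isHermitian_one.sub hK).posSemidef_of_minors_nonneg fun A => ?_⟩
  · rw [← hμ A]
    exact hsum_nonneg id A
  · rw [← sum_Ici_det_dppAtomMatrix]
    simp_rw [dppAtomMatrix_one_sub, congrFun hatom]
    exact hsum_nonneg (·ᶜ) A

end RCLike

/-- **Discrete Macchi–Soshnikov theorem.** For a Hermitian `N × N` complex matrix `K`,
there exists a determinantal point process on `{1,…,N}` with kernel `K` — that is, a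
probability distribution `μ` on subsets `S ⊆ {1,…,N}` with `P(A ⊆ S) = det K_A` for all `A` —
if and only if `0 ≼ K ≼ I` in the positive semidefinite order. -/
theorem macchi_soshnikov_discrete {N : ℕ} (K : Matrix (Fin N) (Fin N) ℂ)
    (hK : K.IsHermitian) :
    (∃ μ : Finset (Fin N) → ℝ,
      (∀ A, 0 ≤ μ A) ∧ (∑ A : Finset (Fin N), μ A) = 1 ∧
      ∀ A : Finset (Fin N),
        ((∑ S ∈ Finset.univ.filter (fun S => A ⊆ S), μ S : ℝ) : ℂ)
          = (dppSubmatrix K A).det)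
    ↔ (K.PosSemidef ∧ (1 - K).PosSemidef) := by
  have hIci : ∀ A : Finset (Fin N), univ.filter (fun S => A ⊆ S) = Ici A := fun A => by
    ext
    simp
  simp only [hIci]
  constructor
  · rintro ⟨μ, hμ_nonneg, -, hμ⟩
    exact hK.posSemidef_and_one_sub_of_dpp hμ_nonneg fun A => by exact_mod_cast hμ A
  · rintro ⟨hK0, hK1⟩
    choose μ hμ_nonneg hμ using fun T =>
      RCLike.nonneg_iff_exists_ofReal.mp (det_dppAtomMatrix_nonneg hK0 hK1 T)
    have hsum (A : Finset (Fin N)) :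
        ((∑ S ∈ Ici A, μ S : ℝ) : ℂ) = (dppSubmatrix K A).det := by
      rw [dppSubmatrix, ← sum_Ici_det_dppAtomMatrix, Complex.ofReal_sum]
      exact sum_congr rfl fun T _ => hμ T
    refine ⟨μ, hμ_nonneg, ?_, hsum⟩
    have htotal := hsum ⊥
    rw [Ici_bot, bot_eq_empty, dppSubmatrix, det_isEmpty] at htotal
    exact_mod_cast htotal
end

section
/- Let B be an r×N real matrix with columns b_1,...,b_N, let C = B Bᵀ, and let (λ_i, w_i), 1 ≤ i ≤ r, be an orthonormal eigendecomposition of C with all λ_i > 0. Set γ_i = 1/λ_i, define the r×N matrices G and H by G_{ij} = b_jᵀ w_i and H_{ij} = γ_i G_{ij}, and for a subset S ⊆ {1,...,N} define the vector z^{(S)} ∈ ℝ^r by z^{(S)}_i = γ_i Σ_{j∈S} G_{ij}² and the r×r matrix A^{(S)} = Σ_{j∈S} h_j h_jᵀ, where h_j is the j-th column of H. Let E ⊆ {1,...,r} and let K be the N×N projection kernel K = Σ_{i∈E} λ_i^{-1} (Bᵀ w_i)(Bᵀ w_i)ᵀ. Let Y ⊆ {1,...,N} be a (possibly empty) set such that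 the submatrix K_Y is invertible, and define the conditional kernel K^Y = K_{Ȳ} − K_{ȲY} (K_Y)^{-1} K_{YȲ}, where Ȳ = {1,...,N} \ Y. Then for every S ⊆ {1,...,N}, Σ_{j ∈ S\Y} (K^Y)_{jj} = 𝟙ᵀ z^{(S)}_E − 𝟙ᵀ [ (K_Y)^{-1} ∘ ( G_{EY}ᵀ A^{(S)}_E G_{EY} ) ] 𝟙, where ∘ denotes the entrywise (Hadamard) product, 𝟙 is the all-ones vector, z^{(S)}_E is the restriction of z^{(S)} to the indices in E, A^{(S)}_E is the submatrix of A^{(S)} with rows and columns in E, and G_{EY} is the submatrix of G with rows in E and columns in Y. -/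
/-!
The diagonal entry `(K^Y)_{jj} = K_{jj} - K_{jY} (K_Y)⁻¹ K_{Yj}` also makes sense for `j ∈ Y`, where
it vanishes because `K_Y (K_Y)⁻¹ K_Y = K_Y`; so the sum over `S \ Y` may be taken over all of `S`.
Since `K = G_Eᵀ diag(γ_E) G_E` is symmetric, `∑_{j ∈ S} K_{jj} = 𝟙ᵀ z^{(S)}_E` and
`∑_{j ∈ S} K_{aj} K_{jb} = (G_{EY}ᵀ A^{(S)}_E G_{EY})_{ab}`; exchanging the sums gives the Hadamard form.
-/

open Matrix

noncomputable section

/-- `G i j = b_jᵀ w_i`, where `b_j` is the `j`-th column of `B`. -/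
def treeG {r N : ℕ} (B : Matrix (Fin r) (Fin N) ℝ) (w : Fin r → Fin r → ℝ) :
    Matrix (Fin r) (Fin N) ℝ :=
  fun i j => ∑ a, B a j * w i a

/-- `H i j = γ_i G i j` with `γ_i = 1/λ_i`. -/
def treeH {r N : ℕ} (lam : Fin r → ℝ) (B : Matrix (Fin r) (Fin N) ℝ)
    (w : Fin r → Fin r → ℝ) : Matrix (Fin r) (Fin N) ℝ :=
  fun i j => (lam i)⁻¹ * treeG B w i j

/-- `z^{(S)}_i = γ_i ∑_{j ∈ S} G_{ij}²`. -/
def treeZ {r N : ℕ} (lam : Fin r → ℝ) (B : Matrix (Fin r) (Fin N) ℝ)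
    (w : Fin r → Fin r → ℝ) (S : Finset (Fin N)) : Fin r → ℝ :=
  fun i => (lam i)⁻¹ * ∑ j ∈ S, (treeG B w i j) ^ 2

/-- `A^{(S)} = ∑_{j ∈ S} h_j h_jᵀ`, `h_j` the `j`-th column of `H`. -/
def treeA {r N : ℕ} (lam : Fin r → ℝ) (B : Matrix (Fin r) (Fin N) ℝ)
    (w : Fin r → Fin r → ℝ) (S : Finset (Fin N)) : Matrix (Fin r) (Fin r) ℝ :=
  fun i₁ i₂ => ∑ j ∈ S, treeH lam B w i₁ j * treeH lam B w i₂ j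

/-- The projection kernel `K = ∑_{i ∈ E} λ_i⁻¹ (Bᵀ w_i)(Bᵀ w_i)ᵀ`. -/
def treeK {r N : ℕ} (lam : Fin r → ℝ) (B : Matrix (Fin r) (Fin N) ℝ)
    (w : Fin r → Fin r → ℝ) (E : Finset (Fin r)) : Matrix (Fin N) (Fin N) ℝ :=
  fun a b => ∑ i ∈ E, (lam i)⁻¹ * ((Bᵀ *ᵥ w i) a) * ((Bᵀ *ᵥ w i) b)

/-- The conditional kernel `K^Y = K_{Ȳ} − K_{ȲY} (K_Y)⁻¹ K_{YȲ}`, indexed by `Ȳ = Yᶜ`. -/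
def condKernel {N : ℕ} (K : Matrix (Fin N) (Fin N) ℝ) (Y : Finset (Fin N)) :
    Matrix ↥(Yᶜ) ↥(Yᶜ) ℝ :=
  K.submatrix (fun a : ↥(Yᶜ) => (a : Fin N)) (fun b : ↥(Yᶜ) => (b : Fin N)) -
    K.submatrix (fun a : ↥(Yᶜ) => (a : Fin N)) (fun b : ↥Y => (b : Fin N)) *
      (K.submatrix (fun a : ↥Y => (a : Fin N)) (fun b : ↥Y => (b : Fin N)))⁻¹ *
      K.submatrix (fun a : ↥Y => (a : Fin N)) (fun b : ↥(Yᶜ) => (b : Fin N))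

namespace Matrix

variable {n R : Type*} [DecidableEq n] [CommRing R]

theorem sum_mul_submatrix_inv_mul_of_mem (K : Matrix n n R) {Y : Finset n}
    (hY : IsUnit (K.submatrix ((↑) : Y → n) (↑)).det) {j : n} (hj : j ∈ Y) :
    ∑ a : Y, ∑ b : Y, K j a * (K.submatrix ((↑) : Y → n) (↑))⁻¹ a b * K b j = K j j := by
  have := congr_fun₂ (nonsing_inv_mul_cancel_right (K.submatrix ((↑) : Y → n) (↑))
    (K.submatrix ((↑) : Y → n) (↑)) hY) ⟨j, hj⟩ ⟨j, hj⟩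
  simp only [mul_apply, submatrix_apply, Finset.sum_mul] at this
  rwa [Finset.sum_comm] at this

end Matrix

open Matrix

theorem condKernel_apply_self {N : ℕ} (K : Matrix (Fin N) (Fin N) ℝ) (Y : Finset (Fin N))
    {j : Fin N} (hj : j ∈ Yᶜ) :
    condKernel K Y ⟨j, hj⟩ ⟨j, hj⟩ =
      K j j - ∑ a : Y, ∑ b : Y, K j a * (K.submatrix ((↑) : Y → Fin N) (↑))⁻¹ a b * K b j := by
  simp only [condKernel, Matrix.sub_apply, mul_apply, submatrix_apply, Finset.sum_mul]
  rw [Finset.sum_comm]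

theorem sum_condKernel_apply_self {N : ℕ} (K : Matrix (Fin N) (Fin N) ℝ) {Y : Finset (Fin N)}
    (hY : IsUnit (K.submatrix ((↑) : Y → Fin N) (↑)).det) (S : Finset (Fin N)) :
    ∑ j ∈ (S \ Y).attach,
        condKernel K Y
          ⟨(j : Fin N), Finset.mem_compl.mpr (Finset.mem_sdiff.mp j.2).2⟩
          ⟨(j : Fin N), Finset.mem_compl.mpr (Finset.mem_sdiff.mp j.2).2⟩ =
      ∑ j ∈ S, (K j j -
        ∑ a : Y, ∑ b : Y, K j a * (K.submatrix ((↑) : Y → Fin N) (↑))⁻¹ a b * K b j) := by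
  simp only [condKernel_apply_self]
  rw [Finset.sum_attach (S \ Y) fun j => K j j -
    ∑ a : Y, ∑ b : Y, K j a * (K.submatrix ((↑) : Y → Fin N) (↑))⁻¹ a b * K b j]
  refine Finset.sum_subset Finset.sdiff_subset fun j hjS hj => ?_
  have hjY : j ∈ Y := by simpa [hjS] using hj
  rw [sum_mul_submatrix_inv_mul_of_mem K hY hjY, sub_self]

section Tree

variable {r N : ℕ} (lam : Fin r → ℝ) (B : Matrix (Fin r) (Fin N) ℝ) (w : Fin r → Fin r → ℝ)

theorem treeK_apply (E : Finset (Fin r)) (a b : Fin N) :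
    treeK lam B w E a b = ∑ i ∈ E, (lam i)⁻¹ * treeG B w i a * treeG B w i b := by
  simp [treeK, treeG, mulVec, dotProduct]

theorem treeK_comm (E : Finset (Fin r)) (a b : Fin N) :
    treeK lam B w E a b = treeK lam B w E b a := by
  simp only [treeK_apply, mul_right_comm]

theorem sum_treeZ_eq_sum_treeK_apply_self (E : Finset (Fin r)) (S : Finset (Fin N)) :
    ∑ i ∈ E, treeZ lam B w S i = ∑ j ∈ S, treeK lam B w E j j := by
  simp only [treeZ, treeK_apply, Finset.mul_sum, sq, mul_assoc]
  exact Finset.sum_comm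

theorem treeG_transpose_mul_treeA_mul_treeG_apply {m m' : Type*} (E : Finset (Fin r))
    (S : Finset (Fin N)) (f : m → Fin N) (g : m' → Fin N) (a : m) (b : m') :
    (((treeG B w).submatrix ((↑) : E → Fin r) f)ᵀ *
        (treeA lam B w S).submatrix ((↑) : E → Fin r) ((↑) : E → Fin r) *
        (treeG B w).submatrix ((↑) : E → Fin r) g) a b =
      ∑ j ∈ S, treeK lam B w E (f a) j * treeK lam B w E j (g b) := by
  simp only [mul_apply, submatrix_apply, transpose_apply, treeA, treeH, treeK_apply,
    Finset.sum_mul, Finset.mul_sum, ← Finset.sum_coe_sort E]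
  rw [Finset.sum_comm (s := S)]
  refine Finset.sum_congr rfl fun i₂ _ => ?_
  rw [Finset.sum_comm (s := S)]
  refine Finset.sum_congr rfl fun i₁ _ => Finset.sum_congr rfl fun j _ => ?_
  ring

end Tree

theorem tree_based_marginal_general {r N : ℕ} (B : Matrix (Fin r) (Fin N) ℝ)
    (lam : Fin r → ℝ) (w : Fin r → Fin r → ℝ)
    (E : Finset (Fin r)) (Y : Finset (Fin N))
    (hY : IsUnit ((treeK lam B w E).submatrix (fun a : ↥Y => (a : Fin N))
      (fun b : ↥Y => (b : Fin N))).det)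
    (S : Finset (Fin N)) :
    (∑ j ∈ (S \ Y).attach,
        condKernel (treeK lam B w E) Y
          ⟨(j : Fin N), Finset.mem_compl.mpr (Finset.mem_sdiff.mp j.2).2⟩
          ⟨(j : Fin N), Finset.mem_compl.mpr (Finset.mem_sdiff.mp j.2).2⟩)
    = (∑ i ∈ E, treeZ lam B w S i) -
        ∑ a : ↥Y, ∑ b : ↥Y,
          ((treeK lam B w E).submatrix (fun a : ↥Y => (a : Fin N))
              (fun b : ↥Y => (b : Fin N)))⁻¹ a b *
            (((treeG B w).submatrix (fun i : ↥E => (i : Fin r)) (fun b : ↥Y => (b : Fin N)))ᵀ *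
              (treeA lam B w S).submatrix (fun i : ↥E => (i : Fin r)) (fun i : ↥E => (i : Fin r)) *
              (treeG B w).submatrix (fun i : ↥E => (i : Fin r)) (fun b : ↥Y => (b : Fin N))) a b := by
  rw [sum_condKernel_apply_self _ hY, Finset.sum_sub_distrib, sum_treeZ_eq_sum_treeK_apply_self]
  congr 1
  simp only [treeG_transpose_mul_treeA_mul_treeG_apply, Finset.mul_sum]
  rw [Finset.sum_comm]
  refine Finset.sum_congr rfl fun a _ => ?_
  rw [Finset.sum_comm]
  refine Finset.sum_congr rfl fun b _ => Finset.sum_congr rfl fun j _ => ?_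
  rw [treeK_comm lam B w E j a, treeK_comm lam B w E b j]
  ring

/-- **Proposition 1 of Gillenwater et al.** (tree-based DPP sampling):
`∑_{j ∈ S \ Y} (K^Y)_{jj} = 𝟙ᵀ z^{(S)}_E − 𝟙ᵀ [ (K_Y)⁻¹ ∘ ( G_{EY}ᵀ A^{(S)}_E G_{EY} ) ] 𝟙`. -/
theorem tree_based_marginal {r N : ℕ} (B : Matrix (Fin r) (Fin N) ℝ)
    (lam : Fin r → ℝ) (w : Fin r → Fin r → ℝ)
    (hlam : ∀ i, 0 < lam i)
    (horth : ∀ i j, w i ⬝ᵥ w j = if i = j then (1 : ℝ) else 0)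
    (heig : ∀ i, (B * Bᵀ) *ᵥ w i = lam i • w i)
    (E : Finset (Fin r)) (Y : Finset (Fin N))
    (hY : IsUnit ((treeK lam B w E).submatrix (fun a : ↥Y => (a : Fin N))
      (fun b : ↥Y => (b : Fin N))).det)
    (S : Finset (Fin N)) :
    (∑ j ∈ (S \ Y).attach,
        condKernel (treeK lam B w E) Y
          ⟨(j : Fin N), Finset.mem_compl.mpr (Finset.mem_sdiff.mp j.2).2⟩
          ⟨(j : Fin N), Finset.mem_compl.mpr (Finset.mem_sdiff.mp j.2).2⟩)
    = (∑ i ∈ E, treeZ lam B w S i) -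
        ∑ a : ↥Y, ∑ b : ↥Y,
          ((treeK lam B w E).submatrix (fun a : ↥Y => (a : Fin N))
              (fun b : ↥Y => (b : Fin N)))⁻¹ a b *
            (((treeG B w).submatrix (fun i : ↥E => (i : Fin r)) (fun b : ↥Y => (b : Fin N)))ᵀ *
              (treeA lam B w S).submatrix (fun i : ↥E => (i : Fin r)) (fun i : ↥E => (i : Fin r)) *
              (treeG B w).submatrix (fun i : ↥E => (i : Fin r)) (fun b : ↥Y => (b : Fin N))) a b :=
  tree_based_marginal_general B lam w E Y hY S

end
end

section
/- Let X = {x_1,...,x_N} be a finite set, let F be a family of non-negative real-valued functions on X, and for f ∈ F let L(f) = Σ_{x∈X} f(x); assume L(f) > 0 for each f ∈ F. Let s: X → (0,∞) satisfy s(x) ≥ sup_{f∈F} f(x)/L(f) for all x ∈ X (an upper bound on the sensitivity), let S = Σ_{x∈X} s(x), and let q(x) = s(x)/S. Let X_1,...,X_m be i.i.d. samples from the distribution q on X and define L_S(f) = (1/m) Σ_{i=1}^m f(X_i)/q(X_i). Then for every ε > 0 and every f ∈ F, P( |L_S(f)/L(f) − 1| > ε ) ≤ 2 exp( −2 m ε²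 / S² ). -/
/-!
Put `g x = f x / q x - L(f)`. Under `q` the variables `g (X i)` are i.i.d. and centred, since
`E[f(X)/q(X)] = ∑ f = L(f)`, and by the sensitivity bound `f x / q x = S f x / s x ≤ S L(f)`, so
`g` takes values in `[-L(f), (S - 1) L(f)]`, an interval of length `S L(f)`. The event
`|L_S(f)/L(f) - 1| > ε` is the event `|∑ i, g (X i)| > m L(f) ε`, which Hoeffding's inequality
bounds by `2 exp(-2 (m L(f) ε)² / (m (S L(f))²)) = 2 exp(-2 m ε² / S²)`. The finite sums over
`Fin m → Fin N` are probabilities under the product of `m` copies of the distribution `q`, where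
Hoeffding's inequality for independent sub-Gaussian variables applies.
-/

open scoped Classical
open Real

open MeasureTheory ProbabilityTheory Finset

noncomputable def PMF.ofRealFintype {α : Type*} [Fintype α] (q : α → ℝ) (hq : ∀ x, 0 ≤ q x)
    (hq1 : ∑ x, q x = 1) : PMF α :=
  PMF.ofFintype (fun x ↦ ENNReal.ofReal (q x)) <| by
    rw [← ENNReal.ofReal_sum_of_nonneg fun x _ ↦ hq x, hq1, ENNReal.ofReal_one]

section FiniteDistribution

variable {α : Type*} [Fintype α] {q : α → ℝ} (hq : ∀ x, 0 ≤ q x) (hq1 : ∑ x, q x = 1)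

lemma PMF.ofRealFintype_apply_toReal (x : α) :
    (PMF.ofRealFintype q hq hq1 x).toReal = q x := by
  simp [PMF.ofRealFintype, hq x]

variable [MeasurableSpace α] [MeasurableSingletonClass α]

lemma PMF.integral_ofRealFintype (g : α → ℝ) :
    ∫ x, g x ∂(PMF.ofRealFintype q hq hq1).toMeasure = ∑ x, q x * g x := by
  simp [PMF.integral_eq_sum, PMF.ofRealFintype_apply_toReal]

lemma PMF.measureReal_pi_ofRealFintype {ι : Type*} [Fintype ι] (A : Finset (ι → α)) :
    (Measure.pi fun _ : ι ↦ (PMF.ofRealFintype q hq hq1).toMeasure).real A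
      = ∑ ω ∈ A, ∏ i, q (ω i) := by
  rw [← sum_measureReal_singleton]
  refine Finset.sum_congr rfl fun ω _ ↦ ?_
  simp [measureReal_def, Measure.pi_singleton, ENNReal.toReal_prod,
    PMF.toMeasure_apply_singleton _ _ (measurableSet_singleton _),
    PMF.ofRealFintype_apply_toReal]

end FiniteDistribution

section Hoeffding

variable {Ω ι : Type*} [MeasurableSpace Ω] [Fintype ι] {μ : Measure Ω} [IsProbabilityMeasure μ]

theorem pi_measureReal_abs_sum_ge_le {g : Ω → ℝ} {a b u : ℝ} (hg : Measurable g)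
    (hg_mem : ∀ x, g x ∈ Set.Icc a b) (hmean : μ[g] = 0) (hu : 0 ≤ u) :
    (Measure.pi fun _ : ι ↦ μ).real {ω | u ≤ |∑ i, g (ω i)|}
      ≤ 2 * exp (-2 * u ^ 2 / (Fintype.card ι * (b - a) ^ 2)) := by
  have hsubG : HasSubgaussianMGF g ((‖b - a‖₊ / 2) ^ 2) μ :=
    hasSubgaussianMGF_of_mem_Icc_of_integral_eq_zero hg.aemeasurable (ae_of_all _ hg_mem) hmean
  have hcoord (i : ι) : HasSubgaussianMGF (fun ω : ι → Ω ↦ g (ω i)) ((‖b - a‖₊ / 2) ^ 2)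
      (Measure.pi fun _ ↦ μ) := by
    refine HasSubgaussianMGF.of_map (Y := fun ω : ι → Ω ↦ ω i)
      (measurable_pi_apply i).aemeasurable ?_
    rwa [(measurePreserving_eval (fun _ ↦ μ) i).map_eq]
  have hindep : iIndepFun (fun i (ω : ι → Ω) ↦ g (ω i)) (Measure.pi fun _ ↦ μ) :=
    iIndepFun_pi fun _ ↦ hg.aemeasurable
  have hindep_neg : iIndepFun (fun i (ω : ι → Ω) ↦ -g (ω i)) (Measure.pi fun _ ↦ μ) :=
    iIndepFun_pi fun _ ↦ hg.neg.aemeasurable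
  have hupper := HasSubgaussianMGF.measure_sum_ge_le_of_iIndepFun hindep (s := univ)
    (fun i _ ↦ hcoord i) hu
  have hlower := HasSubgaussianMGF.measure_sum_ge_le_of_iIndepFun hindep_neg (s := univ)
    (fun i _ ↦ (hcoord i).neg) hu
  have hexp : -u ^ 2 / (2 * ((∑ _i : ι, (‖b - a‖₊ / 2) ^ 2 : NNReal) : ℝ))
      = -2 * u ^ 2 / (Fintype.card ι * (b - a) ^ 2) := by
    push_cast
    rw [sum_const, card_univ, nsmul_eq_mul, Real.norm_eq_abs, div_pow, sq_abs]
    generalize b - a = d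
    ring
  have hevent : {ω : ι → Ω | u ≤ |∑ i, g (ω i)|}
      = {ω | u ≤ ∑ i, g (ω i)} ∪ {ω | u ≤ ∑ i, -g (ω i)} := by
    ext ω
    simp [le_abs]
  rw [hexp] at hupper hlower
  calc _ ≤ _ := hevent ▸ measureReal_union_le _ _
    _ ≤ _ := add_le_add hupper (by simpa using hlower)
    _ = _ := (two_mul _).symm

end Hoeffding

theorem sum_prod_filter_abs_sum_ge_le {α ι : Type*} [Fintype α] [Fintype ι] [DecidableEq ι]
    {q g : α → ℝ} {a b u : ℝ} (hq : ∀ x, 0 ≤ q x) (hq1 : ∑ x, q x = 1) (hg : ∀ x, g x ∈ Set.Icc a b)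
    (hmean : ∑ x, q x * g x = 0) (hu : 0 ≤ u) :
    ∑ ω ∈ univ.filter (fun ω : ι → α ↦ u ≤ |∑ i, g (ω i)|), ∏ i, q (ω i)
      ≤ 2 * exp (-2 * u ^ 2 / (Fintype.card ι * (b - a) ^ 2)) := by
  let : MeasurableSpace α := ⊤
  have : DiscreteMeasurableSpace α := ⟨fun _ ↦ MeasurableSpace.measurableSet_top⟩
  rw [← PMF.measureReal_pi_ofRealFintype hq hq1, coe_filter_univ]
  exact pi_measureReal_abs_sum_ge_le .of_discrete hg
    ((PMF.integral_ofRealFintype hq hq1 g).trans hmean) hu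

lemma sum_mul_div_sub {α : Type*} [Fintype α] {q : α → ℝ} (hq : ∀ x, q x ≠ 0)
    (hq1 : ∑ x, q x = 1) (f : α → ℝ) (c : ℝ) :
    ∑ x, q x * (f x / q x - c) = ∑ x, f x - c := by
  simp_rw [mul_sub, mul_div_cancel₀ _ (hq _), sum_sub_distrib, ← sum_mul, hq1, one_mul]

section Sensitivity

variable {α : Type*} [Fintype α] {f s : α → ℝ}

lemma one_le_sum_of_div_sum_le (hL : 0 < ∑ x, f x) (hsens : ∀ x, f x / ∑ y, f y ≤ s x) :
    1 ≤ ∑ x, s x :=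
  calc 1 = ∑ x, f x / ∑ y, f y := by rw [← sum_div, div_self hL.ne']
    _ ≤ ∑ x, s x := sum_le_sum fun x _ ↦ hsens x

lemma div_div_sum_le_mul_sum (hL : 0 < ∑ x, f x) (hsens : ∀ x, f x / ∑ y, f y ≤ s x)
    {x : α} (hs : 0 < s x) : f x / (s x / ∑ y, s y) ≤ (∑ y, f y) * ∑ y, s y := by
  rw [div_div_eq_mul_div, div_le_iff₀ hs, mul_right_comm]
  refine mul_le_mul_of_nonneg_right ?_ (zero_le_one.trans (one_le_sum_of_div_sum_le hL hsens))
  rw [← div_le_iff₀' hL]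
  exact hsens x

end Sensitivity

lemma lt_abs_div_sub_one_iff {m L T ε : ℝ} (hm : 0 < m) (hL : 0 < L) :
    ε < |(1 / m * T) / L - 1| ↔ m * L * ε < |T - m * L| := by
  rw [show (1 / m * T) / L - 1 = (T - m * L) / (m * L) by field_simp, abs_div,
    abs_of_pos (a := m * L) (by positivity), lt_div_iff₀ (by positivity), mul_comm]

/-- **Sensitivity-based importance sampling concentration** (Hoeffding bound).
The data set is `X = Fin N`, `F` is a family of non-negative functions with positive total
loss `L(f) = ∑_x f(x)`, `s` dominates the sensitivities, `S = ∑_x s(x)`, `q = s/S`.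
Drawing `m` i.i.d. samples `ω 1, …, ω m` from `q` (modelled by the product distribution
`ω ↦ ∏ i, q (ω i)` on `Fin m → Fin N`) and forming
`L_S(f) = (1/m) ∑ i f(ω i)/q(ω i)`, for every `ε > 0` and `f ∈ F`,
`P(|L_S(f)/L(f) − 1| > ε) ≤ 2 exp(−2 m ε² / S²)`. -/
theorem importance_sampling_concentration
    {N m : ℕ} (hm : 0 < m)
    (F : Set ((Fin N) → ℝ))
    (hF : ∀ f ∈ F, ∀ x, 0 ≤ f x)
    (hL : ∀ f ∈ F, 0 < ∑ x, f x)
    (s : Fin N → ℝ) (hs : ∀ x, 0 < s x)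
    (hsens : ∀ f ∈ F, ∀ x, f x / (∑ y, f y) ≤ s x)
    (q : Fin N → ℝ) (hq : ∀ x, q x = s x / (∑ y, s y))
    (f : Fin N → ℝ) (hf : f ∈ F) (ε : ℝ) (hε : 0 < ε) :
    (∑ ω ∈ Finset.univ.filter (fun ω : Fin m → Fin N =>
        ε < |((1 / (m : ℝ)) * ∑ i, f (ω i) / q (ω i)) / (∑ x, f x) - 1|),
      ∏ i, q (ω i))
    ≤ 2 * Real.exp (-(2 * (m : ℝ) * ε ^ 2) / (∑ x, s x) ^ 2) := by
  set L := ∑ x, f x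
  set S := ∑ x, s x
  have hLpos : 0 < L := hL f hf
  have hSpos : 0 < S := zero_lt_one.trans_le (one_le_sum_of_div_sum_le hLpos (hsens f hf))
  have hqpos (x : Fin N) : 0 < q x := hq x ▸ div_pos (hs x) hSpos
  have hq1 : ∑ x, q x = 1 := by simp_rw [hq, ← sum_div]; exact div_self hSpos.ne'
  set g : Fin N → ℝ := fun x ↦ f x / q x - L
  have hg (x : Fin N) : g x ∈ Set.Icc (-L) (L * S - L) := by
    have hweight : f x / q x ≤ L * S := hq x ▸ div_div_sum_le_mul_sum hLpos (hsens f hf) (hs x)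
    constructor <;> linarith [div_nonneg (hF f hf x) (hqpos x).le]
  have hmean : ∑ x, q x * g x = 0 := by rw [sum_mul_div_sub (hqpos · |>.ne') hq1, sub_self]
  have hevent : univ.filter (fun ω : Fin m → Fin N ↦
        ε < |((1 / (m : ℝ)) * ∑ i, f (ω i) / q (ω i)) / L - 1|)
      ⊆ univ.filter (fun ω ↦ m * L * ε ≤ |∑ i, g (ω i)|) := by
    refine monotone_filter_right _ fun ω _ hω ↦ ?_
    rw [lt_abs_div_sub_one_iff (by positivity) hLpos] at hω
    simpa [g, sum_sub_distrib] using hω.le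
  calc _ ≤ ∑ ω ∈ univ.filter (fun ω : Fin m → Fin N ↦ m * L * ε ≤ |∑ i, g (ω i)|),
          ∏ i, q (ω i) :=
        sum_le_sum_of_subset_of_nonneg hevent fun ω _ _ ↦ prod_nonneg fun i _ ↦ (hqpos _).le
    _ ≤ 2 * exp (-2 * (m * L * ε) ^ 2 / (Fintype.card (Fin m) * (L * S - L - -L) ^ 2)) :=
        sum_prod_filter_abs_sum_ge_le (hqpos · |>.le) hq1 hg hmean (by positivity)
    _ = 2 * exp (-(2 * m * ε ^ 2) / S ^ 2) := by
      rw [Fintype.card_fin, sub_neg_eq_add, sub_add_cancel]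
      have hm' : (m : ℝ) ≠ 0 := by positivity
      field_simp
end

section
/- Let S be a determinantal point process on a finite set X = {1,...,N} whose kernel matrix K is a Hermitian projection of rank m (so that |S| = m almost surely), and let f: X → ℝ be a bounded function. Then for all a ≥ 0, P( Λ_S(f) − E[Λ_S(f)] ≥ a ) ≤ exp( − a² / (8 m ‖f‖_∞²) ), where Λ_S(f) = Σ_{x∈S} f(x) and ‖f‖_∞ = max_{x∈X} |f(x)|. -/
/-!
Chernoff bound. Expanding `∏_{x ∈ S} w x = ∑_{B ⊆ S} ∏_{x ∈ B} (w x - 1)` and using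
`P(B ⊆ S) = det K_B` together with the principal-minor expansion of `det (1 + M)` gives
`E ∏_{x ∈ S} w x = det (1 + K (D_w - 1))`. For a projection this equals
`det (1 + K (D_w - 1) K)`, and `1 + K (D_w - 1) K = (1 - K)ᴴ (1 - K) + Kᴴ D_w K` is positive
semidefinite when `w ≥ 0`, so its determinant is at most `exp` of its trace minus `N`
(`λ ≤ exp (λ - 1)` for each eigenvalue). With `w = exp (θ f)`, `e^u - 1 ≤ u + u²` for `|u| ≤ 1`
and `∑ K_xx = tr K = m`, this yields `E e^{θ Λ} ≤ exp (θ E Λ + θ² m ‖f‖²)` whenever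
`θ ‖f‖ ≤ 1`; the choice `θ = a / (2 m ‖f‖²)` is admissible as long as `a ≤ 2 m ‖f‖`. Beyond
that the event is empty: minors of size larger than `rank K = m` vanish, so `|S| ≤ m` almost
surely and `|Λ_S(f)| ≤ m ‖f‖`.
-/

open scoped Classical

/-- `μ` is the law of a determinantal point process on `Fin N` with kernel `K`:
it is a probability distribution on subsets with `P(A ⊆ S) = det K_A` for all `A`. -/
def IsDPPLaw {N : ℕ} (μ : Finset (Fin N) → ℝ) (K : Matrix (Fin N) (Fin N) ℂ) : Prop :=
  (∀ A, 0 ≤ μ A) ∧ (∑ A : Finset (Fin N), μ A) = 1 ∧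
    ∀ A : Finset (Fin N),
      ((∑ S ∈ Finset.univ.filter (fun S => A ⊆ S), μ S : ℝ) : ℂ)
        = (K.submatrix (fun i : A => (i : Fin N)) (fun j : A => (j : Fin N))).det

open Matrix Finset Real
open scoped ComplexOrder

theorem Finset.sum_filter_le_le_exp_mul_sum {ι : Type*} (s : Finset ι) {μ : ι → ℝ}
    (hμ : ∀ i ∈ s, 0 ≤ μ i) (g : ι → ℝ) {θ : ℝ} (hθ : 0 ≤ θ) (t : ℝ) :
    ∑ i ∈ s with t ≤ g i, μ i ≤ exp (-(θ * t)) * ∑ i ∈ s, μ i * exp (θ * g i) := by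
  calc ∑ i ∈ s with t ≤ g i, μ i
      ≤ ∑ i ∈ s with t ≤ g i, μ i * exp (θ * (g i - t)) := by
        refine sum_le_sum fun i hi => ?_
        rw [mem_filter] at hi
        exact le_mul_of_one_le_right (hμ i hi.1)
          (one_le_exp (mul_nonneg hθ (sub_nonneg.mpr hi.2)))
    _ ≤ ∑ i ∈ s, μ i * exp (θ * (g i - t)) :=
        sum_le_sum_of_subset_of_nonneg (filter_subset _ _)
          fun i hi _ => mul_nonneg (hμ i hi) (exp_nonneg _)
    _ = exp (-(θ * t)) * ∑ i ∈ s, μ i * exp (θ * g i) := by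
        rw [mul_sum]
        refine sum_congr rfl fun i _ => ?_
        rw [mul_sub, sub_eq_neg_add, exp_add]
        ring

theorem Real.exp_sub_one_le_add_sq {u c : ℝ} (hu : |u| ≤ c) (hc : c ≤ 1) :
    exp u - 1 ≤ u + c ^ 2 := by
  have hsq : u ^ 2 ≤ c ^ 2 := sq_le_sq' (neg_le_of_abs_le hu) (le_of_abs_le hu)
  linarith [le_of_abs_le (abs_exp_sub_one_sub_id_le (hu.trans hc))]

namespace Matrix

variable {n : Type*} [Fintype n] [DecidableEq n]

theorem det_one_add_eq_sum_det_submatrix {R : Type*} [CommRing R] (M : Matrix n n R) :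
    (1 + M).det = ∑ s : Finset n, (M.submatrix (↑) (↑) : Matrix s s R).det := by
  rw [add_comm]
  change detRowAlternating.toMultilinearMap (M.row + (1 : Matrix n n R).row) = _
  rw [MultilinearMap.map_add_univ]
  exact sum_congr rfl fun s _ => det_piecewise_one_eq_submatrix_det M s

theorem det_submatrix_eq_zero_of_rank_lt {K : Type*} [Field K] (M : Matrix n n K)
    {s : Finset n} (hs : M.rank < s.card) : (M.submatrix (↑) (↑) : Matrix s s K).det = 0 := by
  by_contra hdet
  have hle := M.rank_submatrix_le ((↑) : s → n) ((↑) : s → n)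
  rw [rank_of_isUnit _ ((isUnit_iff_isUnit_det _).mpr (isUnit_iff_ne_zero.mpr hdet)),
    Fintype.card_coe] at hle
  omega

theorem trace_eq_rank_of_isIdempotentElem {K : Type*} [Field K] {P : Matrix n n K}
    (hP : IsIdempotentElem P) : P.trace = P.rank := by
  have hidem : IsIdempotentElem P.toLin' := by
    rw [IsIdempotentElem, Module.End.mul_eq_comp, ← Matrix.toLin'_mul, hP.eq]
  rw [← Matrix.trace_toLin'_eq, (LinearMap.IsIdempotentElem.isProj_range _ hidem).trace]
  rfl

variable {𝕜 : Type*} [RCLike 𝕜]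

theorem PosSemidef.re_det_one_add_le_exp_re_trace {M : Matrix n n 𝕜}
    (hM : (1 + M).PosSemidef) : RCLike.re (1 + M).det ≤ exp (RCLike.re M.trace) := by
  have htrace : RCLike.re M.trace = RCLike.re (1 + M).trace - Fintype.card n := by
    simp [trace_add]
  rw [htrace, hM.1.det_eq_prod_eigenvalues, hM.1.trace_eq_sum_eigenvalues,
    ← RCLike.ofReal_prod, ← RCLike.ofReal_sum, RCLike.ofReal_re, RCLike.ofReal_re]
  calc ∏ i, hM.1.eigenvalues i ≤ ∏ i, exp (hM.1.eigenvalues i - 1) :=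
        prod_le_prod (fun i _ => hM.eigenvalues_nonneg i)
          fun i _ => by linarith [add_one_le_exp (hM.1.eigenvalues i - 1)]
    _ = _ := by simp [← exp_sum, sum_sub_distrib]

theorem posSemidef_one_add_mul_diagonal_mul {K : Matrix n n 𝕜} (hK : K.IsHermitian)
    (hKK : K * K = K) {w : n → ℝ} (hw : ∀ x, 0 ≤ w x) :
    (1 + K * diagonal (fun x => (w x : 𝕜) - 1) * K).PosSemidef := by
  have hsplit : 1 + K * diagonal (fun x => (w x : 𝕜) - 1) * K
      = (1 - K)ᴴ * 1 * (1 - K) + Kᴴ * diagonal (fun x => (w x : 𝕜)) * K := by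
    rw [conjTranspose_sub, conjTranspose_one, hK.eq, ← diagonal_one, ← diagonal_sub,
      diagonal_one]
    simp only [Matrix.mul_sub, Matrix.sub_mul, Matrix.mul_one, Matrix.one_mul, hKK]
    abel
  rw [hsplit]
  exact (PosSemidef.one.conjTranspose_mul_mul_same _).add
    ((posSemidef_diagonal_iff.mpr fun x => by simpa using hw x).conjTranspose_mul_mul_same _)

end Matrix

namespace IsDPPLaw

variable {N : ℕ} {μ : Finset (Fin N) → ℝ} {K : Matrix (Fin N) (Fin N) ℂ}

theorem sum_filter_le_one (hμ : IsDPPLaw μ K) (P : Finset (Fin N) → Prop) :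
    ∑ A with P A, μ A ≤ 1 :=
  (sum_le_sum_of_subset_of_nonneg (filter_subset _ _)
    fun A _ _ => hμ.1 A).trans hμ.2.1.le

theorem re_diag_eq_sum (hμ : IsDPPLaw μ K) (x : Fin N) :
    (K x x).re = ∑ S with x ∈ S, μ S := by
  have h := congrArg Complex.re (hμ.2.2 {x})
  rw [Complex.ofReal_re, det_unique] at h
  simp_rw [singleton_subset_iff] at h
  exact h.symm

theorem eq_zero_of_rank_lt_card (hμ : IsDPPLaw μ K) {A : Finset (Fin N)}
    (hA : K.rank < A.card) : μ A = 0 := by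
  have h := hμ.2.2 A
  rw [det_submatrix_eq_zero_of_rank_lt K hA, Complex.ofReal_eq_zero,
    sum_eq_zero_iff_of_nonneg fun S _ => hμ.1 S] at h
  exact h A (by simp)

theorem abs_sum_le_of_ne_zero (hμ : IsDPPLaw μ K) {f : Fin N → ℝ} {c : ℝ} (hc : 0 ≤ c)
    (hf : ∀ x, |f x| ≤ c) {A : Finset (Fin N)} (hA : μ A ≠ 0) :
    |∑ x ∈ A, f x| ≤ K.rank * c := by
  have hcard : (A.card : ℝ) ≤ K.rank := by
    exact_mod_cast not_lt.mp fun h => hA (hμ.eq_zero_of_rank_lt_card h)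
  calc |∑ x ∈ A, f x| ≤ ∑ x ∈ A, |f x| := abs_sum_le_sum_abs _ _
    _ ≤ A.card * c := by simpa using sum_le_sum fun x (_ : x ∈ A) => hf x
    _ ≤ K.rank * c := mul_le_mul_of_nonneg_right hcard hc

theorem sum_mul_sum_eq (hμ : IsDPPLaw μ K) (f : Fin N → ℝ) :
    ∑ A, μ A * ∑ x ∈ A, f x = ∑ x, (K x x).re * f x := by
  simp_rw [hμ.re_diag_eq_sum, sum_mul, mul_sum, sum_filter]
  rw [sum_comm]
  refine sum_congr rfl fun A _ => ?_
  rw [← sum_filter, filter_mem_eq_inter, univ_inter]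

theorem sum_mul_prod_eq_det (hμ : IsDPPLaw μ K) (w : Fin N → ℂ) :
    ∑ A, (μ A : ℂ) * ∏ x ∈ A, w x = (1 + K * diagonal (fun x => w x - 1)).det := by
  have hminor (B : Finset (Fin N)) :
      ((K * diagonal (fun x => w x - 1)).submatrix (↑) (↑) : Matrix B B ℂ).det
        = (∑ A with B ⊆ A, (μ A : ℂ)) * ∏ x ∈ B, (w x - 1) := by
    have hsub : ((K * diagonal (fun x => w x - 1)).submatrix (↑) (↑) : Matrix B B ℂ)
        = K.submatrix (↑) (↑) * diagonal (fun x : B => w x - 1) := by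
      ext i j
      simp [mul_diagonal]
    rw [hsub, det_mul, det_diagonal, prod_coe_sort B (fun x => w x - 1), ← hμ.2.2 B]
    push_cast
    rfl
  calc ∑ A, (μ A : ℂ) * ∏ x ∈ A, w x
      = ∑ A, ∑ B ∈ A.powerset, (μ A : ℂ) * ∏ x ∈ B, (w x - 1) := by
        simp_rw [← mul_sum, ← prod_add_one, sub_add_cancel]
    _ = ∑ B, (∑ A with B ⊆ A, (μ A : ℂ)) * ∏ x ∈ B, (w x - 1) := by
        simp_rw [sum_mul]
        exact sum_comm' fun A B => by simp
    _ = _ := by simp_rw [← hminor, det_one_add_eq_sum_det_submatrix]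

theorem sum_mul_prod_le_exp (hμ : IsDPPLaw μ K) (hK : K.IsHermitian) (hKK : K * K = K)
    {w : Fin N → ℝ} (hw : ∀ x, 0 ≤ w x) :
    ∑ A, μ A * ∏ x ∈ A, w x ≤ exp (∑ x, (K x x).re * (w x - 1)) := by
  have hdet : ∑ A, μ A * ∏ x ∈ A, w x
      = (1 + K * diagonal (fun x => (w x : ℂ) - 1) * K).det.re := by
    rw [det_one_add_mul_comm, ← Matrix.mul_assoc, hKK,
      ← hμ.sum_mul_prod_eq_det]
    simp [← Complex.ofReal_prod]
  have htrace : (K * diagonal (fun x => (w x : ℂ) - 1) * K).trace.re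
      = ∑ x, (K x x).re * (w x - 1) := by
    rw [trace_mul_cycle, hKK]
    simp [trace, mul_diagonal]
  rw [hdet, ← htrace]
  exact (posSemidef_one_add_mul_diagonal_mul hK hKK hw).re_det_one_add_le_exp_re_trace

theorem sum_mul_exp_le (hμ : IsDPPLaw μ K) (hK : K.IsHermitian) (hKK : K * K = K)
    {f : Fin N → ℝ} {c θ : ℝ} (hf : ∀ x, |f x| ≤ c) (hθc : |θ| * c ≤ 1) :
    ∑ A, μ A * exp (θ * ∑ x ∈ A, f x)
      ≤ exp (θ * ∑ A, μ A * ∑ x ∈ A, f x + θ ^ 2 * (K.rank * c ^ 2)) := by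
  have hdiag (x : Fin N) : 0 ≤ (K x x).re := by
    rw [hμ.re_diag_eq_sum]
    exact sum_nonneg fun S _ => hμ.1 S
  have htrace : ∑ x, (K x x).re = K.rank := by
    simpa [trace] using congrArg Complex.re (trace_eq_rank_of_isIdempotentElem hKK)
  calc ∑ A, μ A * exp (θ * ∑ x ∈ A, f x) = ∑ A, μ A * ∏ x ∈ A, exp (θ * f x) := by
        simp_rw [mul_sum, exp_sum]
    _ ≤ exp (∑ x, (K x x).re * (exp (θ * f x) - 1)) :=
        hμ.sum_mul_prod_le_exp hK hKK fun x => (exp_pos _).le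
    _ ≤ exp (∑ x, (K x x).re * (θ * f x + (|θ| * c) ^ 2)) := by
        gcongr with x
        · exact hdiag x
        · refine exp_sub_one_le_add_sq ?_ hθc
          rw [abs_mul]
          exact mul_le_mul_of_nonneg_left (hf x) (abs_nonneg θ)
    _ = exp (θ * ∑ A, μ A * ∑ x ∈ A, f x + θ ^ 2 * (K.rank * c ^ 2)) := by
        rw [hμ.sum_mul_sum_eq, ← htrace]
        simp only [mul_add, sum_add_distrib, mul_sum, sum_mul, mul_pow, sq_abs]
        congr 2 <;> exact sum_congr rfl fun x _ => by ring

theorem tail_le_exp (hμ : IsDPPLaw μ K) (hK : K.IsHermitian) (hKK : K * K = K)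
    {f : Fin N → ℝ} {c θ : ℝ} (hf : ∀ x, |f x| ≤ c) (hθ : 0 ≤ θ) (hθc : θ * c ≤ 1) (a : ℝ) :
    ∑ A with (∑ B, μ B * ∑ x ∈ B, f x) + a ≤ ∑ x ∈ A, f x, μ A
      ≤ exp (-(θ * a) + θ ^ 2 * (K.rank * c ^ 2)) := by
  set E := ∑ B, μ B * ∑ x ∈ B, f x
  calc ∑ A with E + a ≤ ∑ x ∈ A, f x, μ A
      ≤ exp (-(θ * (E + a))) * ∑ A, μ A * exp (θ * ∑ x ∈ A, f x) :=
        sum_filter_le_le_exp_mul_sum _ (fun A _ => hμ.1 A) _ hθ _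
    _ ≤ exp (-(θ * (E + a))) * exp (θ * E + θ ^ 2 * (K.rank * c ^ 2)) := by
        gcongr
        exact hμ.sum_mul_exp_le hK hKK hf (by rwa [abs_of_nonneg hθ])
    _ = exp (-(θ * a) + θ ^ 2 * (K.rank * c ^ 2)) := by
        rw [← exp_add]
        ring_nf

theorem tail_eq_zero (hμ : IsDPPLaw μ K) {f : Fin N → ℝ} {c a : ℝ} (hc : 0 ≤ c)
    (hf : ∀ x, |f x| ≤ c) (ha : 2 * K.rank * c < a) :
    ∑ A with (∑ B, μ B * ∑ x ∈ B, f x) + a ≤ ∑ x ∈ A, f x, μ A = 0 := by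
  have hmean : -(K.rank * c) ≤ ∑ B, μ B * ∑ x ∈ B, f x := by
    calc -(K.rank * c) = ∑ B, μ B * -(K.rank * c) := by rw [← sum_mul, hμ.2.1, one_mul]
      _ ≤ ∑ B, μ B * ∑ x ∈ B, f x := sum_le_sum fun B _ => by
          rcases eq_or_ne (μ B) 0 with h | h
          · simp [h]
          · exact mul_le_mul_of_nonneg_left
              (neg_le_of_abs_le (hμ.abs_sum_le_of_ne_zero hc hf h)) (hμ.1 B)
  refine sum_eq_zero fun A hA => by_contra fun h => ?_
  rw [mem_filter] at hA
  linarith [le_of_abs_le (hμ.abs_sum_le_of_ne_zero hc hf h)]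

end IsDPPLaw

/-- **Pemantle–Peres concentration for projection DPPs.** If `S` is a DPP on `{1,…,N}`
whose kernel `K` is a Hermitian projection of rank `m`, and `f : {1,…,N} → ℝ` is bounded,
then for all `a ≥ 0`,
`P(Λ_S(f) − E[Λ_S(f)] ≥ a) ≤ exp(−a²/(8 m ‖f‖_∞²))`, where `Λ_S(f) = ∑_{x∈S} f(x)`. -/
theorem projection_dpp_lipschitz_concentration
    {N m : ℕ} (K : Matrix (Fin N) (Fin N) ℂ)
    (hK : K.IsHermitian) (hproj : K * K = K) (hrank : K.rank = m)
    (μ : Finset (Fin N) → ℝ) (hμ : IsDPPLaw μ K)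
    (f : Fin N → ℝ) (a : ℝ) (ha : 0 ≤ a) :
    (∑ A ∈ Finset.univ.filter (fun A : Finset (Fin N) =>
        (∑ B : Finset (Fin N), μ B * ∑ x ∈ B, f x) + a ≤ ∑ x ∈ A, f x),
      μ A)
    ≤ Real.exp (-(a ^ 2) / (8 * (m : ℝ) * (⨆ x : Fin N, |f x|) ^ 2)) := by
  subst hrank
  set c := ⨆ x : Fin N, |f x|
  have hf (x : Fin N) : |f x| ≤ c := le_ciSup (f := fun x => |f x|) (Set.finite_range _).bddAbove x
  have hc : 0 ≤ c := iSup_nonneg fun x => abs_nonneg (f x)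
  rcases (by positivity : (0 : ℝ) ≤ K.rank * c ^ 2).eq_or_lt with hv | hv
  · rw [mul_assoc, ← hv, mul_zero, div_zero, exp_zero]
    exact hμ.sum_filter_le_one _
  rcases le_or_gt a (2 * K.rank * c) with hac | hac
  · set θ := a / (2 * (K.rank * c ^ 2))
    have hθc : θ * c ≤ 1 := by
      rw [div_mul_eq_mul_div, div_le_one (by positivity)]
      nlinarith
    calc _ ≤ exp (-(θ * a) + θ ^ 2 * (K.rank * c ^ 2)) :=
          hμ.tail_le_exp hK hproj hf (by positivity) hθc a
      _ = exp (-(a ^ 2) / (4 * (K.rank * c ^ 2))) := by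
          congr 1
          simp only [θ]
          field_simp
          ring
      _ ≤ exp (-(a ^ 2) / (8 * K.rank * c ^ 2)) := by
          rw [mul_assoc, exp_le_exp, neg_div, neg_div, neg_le_neg_iff]
          gcongr
          norm_num
  · rw [hμ.tail_eq_zero hc hf hac]
    positivity
end

section
/- Let X be a real N×d matrix of rank r, with singular values σ_1 ≥ σ_2 ≥ ... ≥ σ_r > 0, and let k ≤ r. Let S be a random k-element subset of the column indices {1,...,d} drawn by volume sampling, i.e., P(S = T) ∝ det(X_{:T}ᵀ X_{:T}) over all k-element subsets T, where X_{:T} is the submatrix of X formed by the columns indexed by T. For a subset T of column indices, let Π_T X denote the matrix whose i-th column is the orthogonal projection of the i-th column of X onto the linear span of the columns of X indexed by T. Then E[ ‖X − Π_S X‖_Fr² ] ≤ (k+1) Σ_{j=k+1}^{r} σ_j², i.e., the expected Frobenius-norm approximation error under volume sampling is at most (k+1) times the error ‖X − Π_k X‖_Fr² of the best rank-k approximation of X. -/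
/-!
Adding a column `j` to `T` multiplies the Gram determinant by the squared distance of column `j`
to the span of the columns in `T` (base times height), so double counting turns the numerator
into `(k + 1) ∑_{|S| = k+1} det(X_Sᵀ X_S)`. The sum of the `m × m` principal minors of `XᵀX` is
the coefficient of `t^m` in `det(1 + t XᵀX) = ∏_j (1 + t σ_j²)`, i.e. the elementary symmetric
polynomial `e_m(σ²)`. Finally `e_{k+1}(σ²) ≤ (∑_{j ≥ k} σ_j²) e_k(σ²)`: every `(k+1)`-set
contains an index `j ≥ k`, and peeling it off leaves a `k`-set.
-/

open Matrix
noncomputable section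

/-- The `j`-th column of `X`, as a vector of Euclidean space. -/
def col {N d : ℕ} (X : Matrix (Fin N) (Fin d) ℝ) (j : Fin d) : EuclideanSpace ℝ (Fin N) :=
  (WithLp.equiv 2 (Fin N → ℝ)).symm (fun a => X a j)

/-- `‖X − Π_T X‖_Fr²`: the sum over all columns of the squared distance of the column to
the span of the columns of `X` indexed by `T`. -/
def projErr {N d : ℕ} (X : Matrix (Fin N) (Fin d) ℝ) (T : Finset (Fin d)) : ℝ :=
  ∑ j, ‖_root_.col X j -
    (Submodule.orthogonalProjectionOnto (Submodule.span ℝ (_root_.col X '' ↑T)) (_root_.col X j) :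
      EuclideanSpace ℝ (Fin N))‖ ^ 2

/-- The Gram determinant `det(X_{:T}ᵀ X_{:T})` of the columns of `X` indexed by `T`. -/
def gramDet {N d : ℕ} (X : Matrix (Fin N) (Fin d) ℝ) (T : Finset (Fin d)) : ℝ :=
  (((X.submatrix id (fun t : T => (t : Fin d))))ᵀ *
    (X.submatrix id (fun t : T => (t : Fin d)))).det

open Finset

section PrincipalMinors
variable {R : Type*} [CommRing R] {m n : Type*} [Fintype m] [Fintype n] [DecidableEq m]
  [DecidableEq n]

theorem sum_det_submatrix_mul_comm (A : Matrix m n R) (B : Matrix n m R) (k : ℕ) :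
    ∑ s ∈ powersetCard k (univ : Finset m), ((A * B).submatrix (↑) (↑) : Matrix s s R).det
      = ∑ s ∈ powersetCard k (univ : Finset n), ((B * A).submatrix (↑) (↑) : Matrix s s R).det := by
  simp only [← coeff_det_one_add_X_smul_eq_sum_minors, Matrix.map_mul]
  rw [← Matrix.mul_smul, det_one_add_mul_comm, Matrix.smul_mul]

theorem sum_det_submatrix_diagonal (a : n → R) (k : ℕ) :
    ∑ s ∈ powersetCard k (univ : Finset n), ((diagonal a).submatrix (↑) (↑) : Matrix s s R).det
      = ∑ s ∈ powersetCard k (univ : Finset n), ∏ i ∈ s, a i := by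
  refine sum_congr rfl fun s _ => ?_
  rw [submatrix_diagonal _ _ Subtype.val_injective, det_diagonal]
  exact prod_coe_sort s a

theorem sum_det_submatrix_eq_sum_prod_eigenvalues (G : Matrix n n R) (v : n → n → R)
    (μ : n → R) (hv : ∀ i j, v i ⬝ᵥ v j = if i = j then 1 else 0)
    (hG : ∀ j, G *ᵥ v j = μ j • v j) (k : ℕ) :
    ∑ s ∈ powersetCard k (univ : Finset n), (G.submatrix (↑) (↑) : Matrix s s R).det
      = ∑ s ∈ powersetCard k (univ : Finset n), ∏ i ∈ s, μ i := by
  have hQ : of v * (of v)ᵀ = 1 := by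
    ext i j
    simpa [mul_apply, dotProduct, one_apply] using hv i j
  have hGQ : G * (of v)ᵀ = (of v)ᵀ * diagonal μ := by
    ext i j
    rw [mul_diagonal]
    simpa [mul_apply, mulVec, dotProduct, mul_comm] using congrFun (hG j) i
  have hdiag : G = (of v)ᵀ * (diagonal μ * of v) := by
    rw [← Matrix.mul_assoc, ← hGQ, Matrix.mul_assoc, mul_eq_one_comm.mp hQ, Matrix.mul_one]
  rw [hdiag, sum_det_submatrix_mul_comm, Matrix.mul_assoc, hQ, Matrix.mul_one,
    sum_det_submatrix_diagonal]

end PrincipalMinors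

section Gram
variable {E : Type*} [NormedAddCommGroup E] [InnerProductSpace ℝ E] {ι κ : Type*} [Fintype ι]

theorem gram_sum_smul (A : Matrix κ ι ℝ) (g : ι → E) :
    gram ℝ (fun a => ∑ i, A a i • g i) = A * gram ℝ g * Aᵀ := by
  ext a b
  simp only [gram_apply, sum_inner, inner_sum, real_inner_smul_left, real_inner_smul_right,
    mul_apply, transpose_apply, sum_mul]
  exact sum_congr rfl fun i _ => sum_congr rfl fun j _ => by ring

variable [DecidableEq ι]

theorem det_gram_option_elim_of_orthogonal {w : E} {g : ι → E}
    (hw : ∀ i, inner ℝ w (g i) = 0) :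
    (gram ℝ fun o : Option ι => o.elim w g).det = ‖w‖ ^ 2 * (gram ℝ g).det := by
  have hblocks : gram ℝ (fun o : Option ι => o.elim w g) =
      (fromBlocks (gram ℝ g) 0 0 (of fun _ _ : Unit => ‖w‖ ^ 2)).submatrix
        (Equiv.optionEquivSumPUnit ι) (Equiv.optionEquivSumPUnit ι) := by
    ext (_ | i) (_ | j)
    · simp
    · simp [hw]
    · simp [real_inner_comm, hw]
    · simp
  rw [hblocks, det_submatrix_equiv_self, det_fromBlocks_zero₂₁, mul_comm,
    det_unique (of fun _ _ : Unit => ‖w‖ ^ 2), of_apply]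

theorem det_gram_option_elim_add_sum_smul (w : E) (g : ι → E) (c : ι → ℝ) :
    (gram ℝ fun o : Option ι => o.elim (w + ∑ i, c i • g i) g).det =
      (gram ℝ fun o : Option ι => o.elim w g).det := by
  let u : Option ι → ℝ := fun o => o.elim 1 0
  let b : Option ι → ℝ := fun o => o.elim 0 c
  let A : Matrix (Option ι) (Option ι) ℝ := 1 + replicateCol Unit u * replicateRow Unit b
  have hA : A.det = 1 := by
    rw [det_one_add_replicateCol_mul_replicateRow]
    simp [u, b, dotProduct]
  have hcomb : (fun o : Option ι => o.elim (w + ∑ i, c i • g i) g) =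
      fun o => ∑ o', A o o' • o'.elim w g := by
    funext o
    cases o <;> simp [A, u, b, Fintype.sum_option, one_apply, add_smul, mul_apply]
  rw [hcomb, gram_sum_smul, det_mul, det_mul, det_transpose, hA, one_mul, mul_one]

theorem det_gram_option_elim (x : E) (g : ι → E)
    [(Submodule.span ℝ (Set.range g)).HasOrthogonalProjection] :
    (gram ℝ fun o : Option ι => o.elim x g).det =
      ‖x - (Submodule.span ℝ (Set.range g)).starProjection x‖ ^ 2 * (gram ℝ g).det := by
  set K := Submodule.span ℝ (Set.range g)
  obtain ⟨c, hc⟩ := (Submodule.mem_span_range_iff_exists_fun ℝ).mp (K.starProjection_apply_mem x)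
  have hx : x = (x - K.starProjection x) + ∑ i, c i • g i := by rw [hc]; abel
  have horth : ∀ i, inner ℝ (x - K.starProjection x) (g i) = 0 := fun i =>
    (K.mem_orthogonal' _).mp (K.sub_starProjection_mem_orthogonal x) _
      (Submodule.subset_span ⟨i, rfl⟩)
  conv_lhs => rw [hx]
  rw [det_gram_option_elim_add_sum_smul, det_gram_option_elim_of_orthogonal horth]

end Gram

section DoubleCounting
variable {α : Type*} [Fintype α] [DecidableEq α]

theorem sum_powersetCard_sum_compl_insert {M : Type*} [AddCommMonoid M]
    (F : Finset α → α → M) (k : ℕ) :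
    ∑ T ∈ powersetCard k (univ : Finset α), ∑ j ∈ Tᶜ, F (insert j T) j
      = ∑ S ∈ powersetCard (k + 1) (univ : Finset α), ∑ j ∈ S, F S j := by
  rw [sum_sigma', sum_sigma']
  refine sum_nbij' (fun p => ⟨insert p.2 p.1, p.2⟩) (fun p => ⟨p.1.erase p.2, p.2⟩)
    ?_ ?_ ?_ ?_ ?_ <;> rintro ⟨T, j⟩ hp <;>
    simp only [mem_sigma, mem_powersetCard_univ, mem_compl] at hp ⊢
  · exact ⟨by rw [card_insert_of_notMem hp.2, hp.1], mem_insert_self _ _⟩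
  · exact ⟨by rw [card_erase_of_mem hp.2, hp.1, Nat.add_sub_cancel], notMem_erase _ _⟩
  · simp [erase_insert hp.2]
  · simp [insert_erase hp.2]

theorem sum_prod_powersetCard_succ_le (b : α → ℝ) (hb : ∀ j, 0 ≤ b j) (k : ℕ) (p : α → Prop)
    [DecidablePred p] (hp : ∀ S ∈ powersetCard (k + 1) (univ : Finset α), ∃ j ∈ S, p j) :
    ∑ S ∈ powersetCard (k + 1) (univ : Finset α), ∏ j ∈ S, b j
      ≤ (∑ j ∈ univ.filter p, b j) * ∑ T ∈ powersetCard k (univ : Finset α), ∏ j ∈ T, b j := by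
  have hprod : ∀ S : Finset α, 0 ≤ ∏ j ∈ S, b j := fun S => prod_nonneg fun j _ => hb j
  calc ∑ S ∈ powersetCard (k + 1) (univ : Finset α), ∏ j ∈ S, b j
      ≤ ∑ S ∈ powersetCard (k + 1) (univ : Finset α), ∑ _j ∈ S.filter p, ∏ j ∈ S, b j := by
        refine sum_le_sum fun S hS => ?_
        obtain ⟨j, hjS, hj⟩ := hp S hS
        rw [sum_const, nsmul_eq_mul]
        exact le_mul_of_one_le_left (hprod S)
          (Nat.one_le_cast.mpr (card_pos.mpr ⟨j, mem_filter.mpr ⟨hjS, hj⟩⟩))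
    _ = ∑ T ∈ powersetCard k (univ : Finset α),
          ∑ j ∈ Tᶜ, if p j then ∏ i ∈ insert j T, b i else 0 := by
        rw [sum_powersetCard_sum_compl_insert (fun S j => if p j then ∏ i ∈ S, b i else 0)]
        simp only [sum_filter]
    _ ≤ ∑ T ∈ powersetCard k (univ : Finset α), ∑ j ∈ univ.filter p, b j * ∏ i ∈ T, b i := by
        refine sum_le_sum fun T _ => ?_
        rw [← sum_filter]
        calc ∑ j ∈ Tᶜ.filter p, ∏ i ∈ insert j T, b i = ∑ j ∈ Tᶜ.filter p, b j * ∏ i ∈ T, b i :=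
              sum_congr rfl fun j hj => prod_insert (mem_compl.mp (mem_filter.mp hj).1)
          _ ≤ ∑ j ∈ univ.filter p, b j * ∏ i ∈ T, b i :=
              sum_le_sum_of_subset_of_nonneg (filter_subset_filter p (subset_univ _))
                fun j _ _ => mul_nonneg (hb j) (hprod T)
    _ = (∑ j ∈ univ.filter p, b j) * ∑ T ∈ powersetCard k (univ : Finset α), ∏ j ∈ T, b j := by
        rw [sum_mul_sum, sum_comm]

end DoubleCounting

theorem Fin.exists_mem_le_val_of_card_eq {d k : ℕ} {S : Finset (Fin d)} (hS : S.card = k + 1) :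
    ∃ j ∈ S, k ≤ (j : ℕ) := by
  by_contra! h
  have hsub : S ⊆ univ.filter fun j : Fin d => (j : ℕ) < k := fun j hj =>
    mem_filter.mpr ⟨mem_univ j, h j hj⟩
  have hcard := card_le_card hsub
  rw [Fin.card_filter_val_lt] at hcard
  omega

theorem sum_fin_filter_le_sum_Ico {d k r : ℕ} (a : ℕ → ℝ) (ha : ∀ j, 0 ≤ a j)
    (hr : ∀ j, r ≤ j → a j = 0) :
    ∑ j ∈ univ.filter fun j : Fin d => k ≤ (j : ℕ), a j ≤ ∑ j ∈ Ico k r, a j := by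
  calc ∑ j ∈ univ.filter fun j : Fin d => k ≤ (j : ℕ), a j
      = ∑ j ∈ ((univ.filter fun j : Fin d => k ≤ (j : ℕ)).map Fin.valEmbedding).filter (a · ≠ 0),
          a j := by
        rw [sum_filter_ne_zero, sum_map]
        rfl
    _ ≤ ∑ j ∈ Ico k r, a j := by
        refine sum_le_sum_of_subset_of_nonneg (fun j hj => ?_) fun j _ _ => ha j
        simp only [mem_filter, mem_map, mem_univ, true_and, Fin.valEmbedding_apply] at hj
        obtain ⟨⟨i, hi, rfl⟩, hne⟩ := hj
        exact mem_Ico.mpr ⟨hi, not_le.mp fun h => hne (hr _ h)⟩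

section Columns
variable {N d : ℕ} (X : Matrix (Fin N) (Fin d) ℝ)

theorem gramDet_eq_det_submatrix (T : Finset (Fin d)) :
    gramDet X T = ((Xᵀ * X).submatrix (↑) (↑) : Matrix T T ℝ).det := rfl

theorem gramDet_eq_det_gram (T : Finset (Fin d)) :
    gramDet X T = (gram ℝ fun t : T => _root_.col X t).det := by
  unfold gramDet
  congr 1
  ext s t
  simp [mul_apply, _root_.col, PiLp.inner_apply, mul_comm]

theorem gramDet_insert {T : Finset (Fin d)} {j : Fin d} (hj : j ∉ T) :
    gramDet X (insert j T) = ‖_root_.col X j -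
        (Submodule.span ℝ (_root_.col X '' ↑T)).starProjection (_root_.col X j)‖ ^ 2 *
      gramDet X T := by
  have hspan : Submodule.span ℝ (_root_.col X '' ↑T) =
      Submodule.span ℝ (Set.range fun t : T => _root_.col X t) := by
    rw [Set.image_eq_range]
    rfl
  simp only [gramDet_eq_det_gram, hspan]
  rw [← det_gram_option_elim, ← det_submatrix_equiv_self (subtypeInsertEquivOption hj).symm]
  congr 1
  ext (_ | s) (_ | t) <;> rfl

theorem projErr_eq_sum_compl (T : Finset (Fin d)) :
    projErr X T =
      ∑ j ∈ Tᶜ, ‖_root_.col X j -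
        (Submodule.span ℝ (_root_.col X '' ↑T)).starProjection (_root_.col X j)‖ ^ 2 := by
  rw [projErr, ← sum_add_sum_compl T]
  simp only [Submodule.coe_orthogonalProjectionOnto_apply]
  rw [add_eq_right]
  refine sum_eq_zero fun j hj => ?_
  rw [Submodule.starProjection_eq_self_iff.mpr
    (Submodule.subset_span (Set.mem_image_of_mem _ hj)), sub_self, norm_zero, zero_pow two_ne_zero]

theorem sum_gramDet_mul_projErr (k : ℕ) :
    ∑ T ∈ powersetCard k (univ : Finset (Fin d)), gramDet X T * projErr X T
      = (k + 1 : ℝ) * ∑ S ∈ powersetCard (k + 1) (univ : Finset (Fin d)), gramDet X S := by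
  calc ∑ T ∈ powersetCard k (univ : Finset (Fin d)), gramDet X T * projErr X T
      = ∑ T ∈ powersetCard k (univ : Finset (Fin d)), ∑ j ∈ Tᶜ, gramDet X (insert j T) := by
        refine sum_congr rfl fun T _ => ?_
        rw [projErr_eq_sum_compl, mul_sum]
        exact sum_congr rfl fun j hj => by rw [gramDet_insert X (mem_compl.mp hj), mul_comm]
    _ = ∑ S ∈ powersetCard (k + 1) (univ : Finset (Fin d)), ∑ _j ∈ S, gramDet X S :=
        sum_powersetCard_sum_compl_insert (fun S _ => gramDet X S) k
    _ = _ := by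
        rw [mul_sum]
        refine sum_congr rfl fun S hS => ?_
        rw [sum_const, mem_powersetCard_univ.mp hS, nsmul_eq_mul]
        push_cast
        ring

end Columns

/-- `σ` is 0-indexed (`σ j` is the paper's `σ_{j+1}`); the singular values are pinned down
through the orthonormal eigenbasis `v` of `XᵀX`. -/
theorem volume_sampling_bound_general {N d : ℕ} (X : Matrix (Fin N) (Fin d) ℝ)
    (r k : ℕ)
    (σ : ℕ → ℝ) (v : Fin d → Fin d → ℝ)
    (hσ_zero : ∀ j : ℕ, r ≤ j → σ j = 0)
    (hv_orth : ∀ i j, v i ⬝ᵥ v j = if i = j then (1 : ℝ) else 0)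
    (hv_eig : ∀ j : Fin d, (Xᵀ * X) *ᵥ v j = (σ (j : ℕ) ^ 2) • v j) :
    (∑ T ∈ Finset.powersetCard k (Finset.univ : Finset (Fin d)), gramDet X T * projErr X T) /
      (∑ T ∈ Finset.powersetCard k (Finset.univ : Finset (Fin d)), gramDet X T)
    ≤ (k + 1 : ℝ) * ∑ j ∈ Finset.Ico k r, σ j ^ 2 := by
  have hspec : ∀ m, ∑ T ∈ powersetCard m (univ : Finset (Fin d)), gramDet X T
      = ∑ T ∈ powersetCard m (univ : Finset (Fin d)), ∏ j ∈ T, σ (j : ℕ) ^ 2 := fun m => by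
    simp only [gramDet_eq_det_submatrix]
    exact sum_det_submatrix_eq_sum_prod_eigenvalues _ v _ hv_orth hv_eig m
  have he_nonneg : 0 ≤ ∑ T ∈ powersetCard k (univ : Finset (Fin d)), ∏ j ∈ T, σ (j : ℕ) ^ 2 :=
    sum_nonneg fun T _ => prod_nonneg fun j _ => sq_nonneg _
  rw [sum_gramDet_mul_projErr, hspec, hspec]
  refine div_le_of_le_mul₀ he_nonneg (by positivity) ?_
  calc (k + 1 : ℝ) * ∑ S ∈ powersetCard (k + 1) (univ : Finset (Fin d)), ∏ j ∈ S, σ (j : ℕ) ^ 2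
      ≤ (k + 1) * ((∑ j ∈ univ.filter fun j : Fin d => k ≤ (j : ℕ), σ j ^ 2) *
          ∑ T ∈ powersetCard k (univ : Finset (Fin d)), ∏ j ∈ T, σ (j : ℕ) ^ 2) := by
        gcongr
        exact sum_prod_powersetCard_succ_le _ (fun j => sq_nonneg _) k _ fun S hS =>
          Fin.exists_mem_le_val_of_card_eq (mem_powersetCard_univ.mp hS)
    _ ≤ (k + 1) * ((∑ j ∈ Ico k r, σ j ^ 2) *
          ∑ T ∈ powersetCard k (univ : Finset (Fin d)), ∏ j ∈ T, σ (j : ℕ) ^ 2) := by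
        gcongr
        exact sum_fin_filter_le_sum_Ico _ (fun j => sq_nonneg _) fun j hj => by
          rw [hσ_zero j hj, sq, zero_mul]
    _ = _ := by ring

/-- **Volume sampling approximation guarantee** (Deshpande–Rademacher–Vempala–Wang,
Thm 1.3). If `S` is a `k`-subset of columns drawn with `P(S = T) ∝ det(X_{:T}ᵀX_{:T})`,
then `E[‖X − Π_S X‖_Fr²] ≤ (k+1) ∑_{j>k} σ_j²`. Here `σ_1 ≥ … ≥ σ_r > 0` (1-indexed;
`σ` below is 0-indexed) are the singular values of `X`, pinned down by an orthonormal
eigenbasis `v` of `XᵀX`. -/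
theorem volume_sampling_bound {N d : ℕ} (X : Matrix (Fin N) (Fin d) ℝ)
    (r k : ℕ) (hk : k ≤ r) (hrank : X.rank = r)
    (σ : ℕ → ℝ) (v : Fin d → Fin d → ℝ)
    (hσ_anti : ∀ i j : ℕ, i ≤ j → σ j ≤ σ i)
    (hσ_pos : ∀ j : ℕ, j < r → 0 < σ j)
    (hσ_zero : ∀ j : ℕ, r ≤ j → σ j = 0)
    (hv_orth : ∀ i j, v i ⬝ᵥ v j = if i = j then (1 : ℝ) else 0)
    (hv_eig : ∀ j : Fin d, (Xᵀ * X) *ᵥ v j = (σ (j : ℕ) ^ 2) • v j) :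
    (∑ T ∈ Finset.powersetCard k (Finset.univ : Finset (Fin d)), gramDet X T * projErr X T) /
      (∑ T ∈ Finset.powersetCard k (Finset.univ : Finset (Fin d)), gramDet X T)
    ≤ (k + 1 : ℝ) * ∑ j ∈ Finset.Ico k r, σ j ^ 2 :=
  volume_sampling_bound_general X r k σ v hσ_zero hv_orth hv_eig

end
end

section
/- Let X be a real N×d matrix of rank r with singular values σ_1 ≥ ... ≥ σ_r > 0, let k ≤ r, and let δ ∈ (0,1). Sample s column indices i_1,...,i_s i.i.d. from the length-squared distribution p_i = ‖X_{:i}‖² / ‖X‖_Fr² on {1,...,d}, and let S = {i_1,...,i_s}. Let 𝓛_k(S) = min{ ‖X − X_{:S} B‖_Fr² : B ∈ ℝ^{|S|×d}, rank(B) ≤ k }. Then with probability at least 1 − δ, 𝓛_k(S) ≤ Σ_{j=k+1}^{r} σ_j² + 2 ( 1 + √(8 log(2/δ)) ) √(k/s) · ‖X‖_Fr². -/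
open Matrix
open scoped Classical
noncomputable section

/-- Squared Frobenius norm. -/
def frobSq {N d : ℕ} (M : Matrix (Fin N) (Fin d) ℝ) : ℝ :=
  ∑ i, ∑ j, M i j ^ 2

/-- `𝓛_k(S) = min{ ‖X − X_{:S}B‖_Fr² : B ∈ ℝ^{|S|×d}, rank B ≤ k }`. -/
def lossK {N d : ℕ} (X : Matrix (Fin N) (Fin d) ℝ) (k : ℕ) (S : Finset (Fin d)) : ℝ :=
  sInf {e : ℝ | ∃ B : Matrix ↥S (Fin d) ℝ, B.rank ≤ k ∧
    e = frobSq (X - (X.submatrix id (fun t : S => (t : Fin d))) * B)}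

/-!
Write `p` for the length-squared distribution and `v_j` for the right singular vectors of `X`.
For samples `i_1, …, i_n`, the importance-sampling estimate
`ŷ_j = (1/n) ∑_t X_{:i_t} v_j(i_t) / p_{i_t}` of `X v_j` lies in the span of the sampled columns, so the rank-`k` matrix `∑_{j<k} ŷ_j v_jᵀ`
gives `𝓛_k(S) ≤ ∑_{j ≥ k} σ_j² + ∑_{j<k} ‖X v_j - ŷ_j‖²`. Each `ŷ_j` averages `n` i.i.d. unbiased
estimates with second moment at most `‖X‖_Fr²`, so the deviation has mean at most `k ‖X‖_Fr² / n`,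
and by Markov's inequality it exceeds twice that with probability at most `1/2`.
To reach confidence `1 - δ`, split the `s` samples into `m ≈ log₂ (1/δ)` disjoint blocks
of `n = ⌊s/m⌋` samples: the bound can only fail if it fails on every block,
which has probability at most `2⁻ᵐ ≤ δ`, and `2k/n ≤ 2 (1 + √(8 log (2/δ))) √(k/s)`.
-/

section Sampling

variable {ι τ : Type*} [Fintype ι] [Fintype τ] [DecidableEq τ] (p : ι → ℝ)

theorem sum_prod_apply_eq_one (hp : ∑ i, p i = 1) : ∑ ω : τ → ι, ∏ t, p (ω t) = 1 := by
  rw [← Fintype.prod_sum fun (_ : τ) i => p i]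
  simp [hp]

theorem sum_prod_apply_mul_fin_cons {n : ℕ} (F : (Fin (n + 1) → ι) → ℝ) :
    ∑ ω : Fin (n + 1) → ι, (∏ t, p (ω t)) * F ω =
      ∑ i, p i * ∑ β : Fin n → ι, (∏ t, p (β t)) * F (Fin.cons i β) := by
  rw [← (Fin.consEquiv fun _ => ι).sum_comp, Fintype.sum_prod_type]
  simp [Fin.consEquiv, Fin.prod_univ_succ, Finset.mul_sum, mul_assoc]

theorem sum_prod_apply_mul_sum_sq (hp : ∑ i, p i = 1) {g : ι → ℝ} (hg : ∑ i, p i * g i = 0)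
    (n : ℕ) :
    ∑ ω : Fin n → ι, (∏ t, p (ω t)) * (∑ t, g (ω t)) ^ 2 = n * ∑ i, p i * g i ^ 2 := by
  induction n with
  | zero => simp
  | succ n ih =>
    set V := ∑ i, p i * g i ^ 2
    set E := ∑ β : Fin n → ι, (∏ t, p (β t)) * ∑ t, g (β t)
    have hcons (i : ι) :
        ∑ β : Fin n → ι, (∏ t, p (β t)) * (∑ t, g ((Fin.cons i β : Fin (n + 1) → ι) t)) ^ 2 =
          g i ^ 2 + 2 * g i * E + n * V := by
      have h (β : Fin n → ι) : (∏ t, p (β t)) * (∑ t, g ((Fin.cons i β : Fin (n + 1) → ι) t)) ^ 2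
          = g i ^ 2 * ∏ t, p (β t) + 2 * g i * ((∏ t, p (β t)) * ∑ t, g (β t)) +
            (∏ t, p (β t)) * (∑ t, g (β t)) ^ 2 := by
        simp only [Fin.sum_univ_succ, Fin.cons_zero, Fin.cons_succ]
        ring
      simp only [h, Finset.sum_add_distrib, ← Finset.mul_sum, sum_prod_apply_eq_one p hp, ih, E]
      ring
    rw [sum_prod_apply_mul_fin_cons]
    simp only [hcons, mul_add, Finset.sum_add_distrib, ← Finset.sum_mul]
    have hcross : ∑ i, p i * (2 * g i * E) = 0 := by
      rw [← mul_zero (2 * E), ← hg, Finset.mul_sum]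
      exact Finset.sum_congr rfl fun _ _ => by ring
    rw [hp, hcross]
    push_cast
    ring

theorem sum_prod_apply_mul_sampleMean_sub_sq_le (hp : ∑ i, p i = 1) {n : ℕ} (hn : 0 < n)
    (g : ι → ℝ) :
    ∑ ω : Fin n → ι, (∏ t, p (ω t)) * ((n : ℝ)⁻¹ * ∑ t, g (ω t) - ∑ i, p i * g i) ^ 2 ≤
      (n : ℝ)⁻¹ * ∑ i, p i * g i ^ 2 := by
  set μ := ∑ i, p i * g i
  have hcenter : ∑ i, p i * (g i - μ) = 0 := by
    simp only [mul_sub, Finset.sum_sub_distrib, ← Finset.sum_mul, hp, one_mul, μ, sub_self]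
  have hvar : ∑ i, p i * (g i - μ) ^ 2 = ∑ i, p i * g i ^ 2 - μ ^ 2 := by
    have (i : ι) : p i * (g i - μ) ^ 2 = p i * g i ^ 2 - 2 * μ * (p i * g i) + μ ^ 2 * p i := by
      ring
    simp only [this, Finset.sum_add_distrib, Finset.sum_sub_distrib, ← Finset.mul_sum, hp, μ]
    ring
  have hn' : (n : ℝ) ≠ 0 := by positivity
  have hmean (ω : Fin n → ι) :
      (n : ℝ)⁻¹ * ∑ t, g (ω t) - μ = (n : ℝ)⁻¹ * ∑ t, (g (ω t) - μ) := by
    rw [Finset.sum_sub_distrib]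
    simp [mul_sub, hn']
  calc ∑ ω : Fin n → ι, (∏ t, p (ω t)) * ((n : ℝ)⁻¹ * ∑ t, g (ω t) - μ) ^ 2
      = (n : ℝ)⁻¹ ^ 2 * ∑ ω : Fin n → ι, (∏ t, p (ω t)) * (∑ t, (g (ω t) - μ)) ^ 2 := by
        rw [Finset.mul_sum]
        exact Finset.sum_congr rfl fun ω _ => by rw [hmean]; ring
    _ = (n : ℝ)⁻¹ * (∑ i, p i * g i ^ 2 - μ ^ 2) := by
        rw [sum_prod_apply_mul_sum_sq p hp hcenter, hvar]
        field_simp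
    _ ≤ (n : ℝ)⁻¹ * ∑ i, p i * g i ^ 2 := by
        gcongr
        linarith [sq_nonneg μ]

theorem sum_prod_apply_mul_comp_of_injective (hp : ∑ i, p i = 1) {κ : Type*} [Fintype κ]
    [DecidableEq κ] {φ : κ → τ} (hφ : Function.Injective φ) (F : (κ → ι) → ℝ) :
    ∑ ω : τ → ι, (∏ t, p (ω t)) * F (ω ∘ φ) = ∑ β : κ → ι, (∏ u, p (β u)) * F β := by
  let R := {t // t ∉ Set.range φ}
  let e : κ ⊕ R ≃ τ := (Equiv.sumCongr (Equiv.ofInjective φ hφ) (Equiv.refl R)).trans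
    (Equiv.sumCompl (· ∈ Set.range φ))
  have he (u : κ) : e.symm (φ u) = Sum.inl u := e.symm_apply_eq.mpr rfl
  rw [← ((Equiv.sumArrowEquivProdArrow κ R ι).symm.trans (e.arrowCongr (Equiv.refl ι))).sum_comp,
    Fintype.sum_prod_type]
  refine Finset.sum_congr rfl fun β _ => ?_
  have hweight (γ : R → ι) :
      ∏ t, p ((Equiv.sumArrowEquivProdArrow κ R ι).symm (β, γ) (e.symm t)) =
        (∏ u, p (β u)) * ∏ r, p (γ r) := by
    rw [e.symm.prod_comp fun x => p ((Equiv.sumArrowEquivProdArrow κ R ι).symm (β, γ) x),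
      Fintype.prod_sum_type]
    simp
  simp only [Equiv.trans_apply, Equiv.arrowCongr_apply, Equiv.coe_refl, Function.comp_def,
    id, he, Equiv.sumArrowEquivProdArrow_symm_apply_inl, hweight, mul_right_comm _ _ (F β),
    ← Finset.mul_sum, sum_prod_apply_eq_one p hp, mul_one]

theorem sum_prod_apply_mul_prod_curry {κ μ : Type*} [Fintype κ] [DecidableEq κ] [Fintype μ]
    [DecidableEq μ] (H : (μ → ι) → ℝ) :
    ∑ β : κ × μ → ι, (∏ u, p (β u)) * ∏ g, H (fun t => β (g, t)) =
      (∑ α : μ → ι, (∏ t, p (α t)) * H α) ^ Fintype.card κ := by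
  rw [← Finset.card_univ, ← Finset.prod_const, Fintype.prod_sum,
    ← (Equiv.curry κ μ ι).symm.sum_comp]
  refine Finset.sum_congr rfl fun β _ => ?_
  simp [Fintype.prod_prod_type, Finset.prod_mul_distrib]

theorem mul_sum_filter_le_sum_mul {A : Type*} [Fintype A] {w G : A → ℝ} (hw : ∀ x, 0 ≤ w x)
    (hG : ∀ x, 0 ≤ G x) (c : ℝ) :
    c * ∑ x ∈ Finset.univ.filter (fun x => c ≤ G x), w x ≤ ∑ x, w x * G x :=
  calc c * ∑ x ∈ Finset.univ.filter (fun x => c ≤ G x), w x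
      = ∑ x ∈ Finset.univ.filter (fun x => c ≤ G x), w x * c := by
        rw [Finset.mul_sum]
        simp [mul_comm]
    _ ≤ ∑ x ∈ Finset.univ.filter (fun x => c ≤ G x), w x * G x :=
        Finset.sum_le_sum fun x hx => mul_le_mul_of_nonneg_left (Finset.mem_filter.mp hx).2 (hw x)
    _ ≤ ∑ x, w x * G x :=
        Finset.sum_le_sum_of_subset_of_nonneg (Finset.filter_subset _ _)
          fun x _ _ => mul_nonneg (hw x) (hG x)

theorem one_sub_le_sum_filter {A : Type*} [Fintype A] {w : A → ℝ} (hw : ∑ x, w x = 1)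
    (P : A → Prop) [DecidablePred P] {δ : ℝ}
    (h : ∑ x ∈ Finset.univ.filter (fun x => ¬ P x), w x ≤ δ) :
    1 - δ ≤ ∑ x ∈ Finset.univ.filter P, w x := by
  have := Finset.sum_filter_add_sum_filter_not Finset.univ P w
  linarith

theorem sum_filter_forall_comp_prod_eq_pow (hp : ∑ i, p i = 1) {κ μ : Type*} [Fintype κ]
    [DecidableEq κ] [Fintype μ] [DecidableEq μ] {φ : κ × μ → τ} (hφ : Function.Injective φ)
    (P : (μ → ι) → Prop) [DecidablePred P] :
    ∑ ω ∈ Finset.univ.filter (fun ω : τ → ι => ∀ g, P fun t => ω (φ (g, t))), ∏ t, p (ω t) =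
      (∑ α ∈ Finset.univ.filter P, ∏ t, p (α t)) ^ Fintype.card κ :=
  calc _ = ∑ ω : τ → ι, (∏ t, p (ω t)) * ∏ g, if P (fun t => ω (φ (g, t))) then 1 else 0 := by
        rw [Finset.sum_filter]
        exact Finset.sum_congr rfl fun ω _ => by rw [Fintype.prod_boole, mul_boole]
    _ = ∑ β : κ × μ → ι, (∏ u, p (β u)) * ∏ g, if P (fun t => β (g, t)) then 1 else 0 :=
        sum_prod_apply_mul_comp_of_injective p hp hφ
          fun β => ∏ g, if P (fun t => β (g, t)) then 1 else 0
    _ = (∑ α : μ → ι, (∏ t, p (α t)) * if P α then 1 else 0) ^ Fintype.card κ :=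
        sum_prod_apply_mul_prod_curry p fun α => if P α then 1 else 0
    _ = _ := by simp only [Finset.sum_filter, mul_boole]

end Sampling

theorem sum_filter_le_eq_sum_Ico {d r : ℕ} (k : ℕ) {f : ℕ → ℝ} (hrd : r ≤ d)
    (hf : ∀ j, r ≤ j → f j = 0) :
    ∑ j ∈ Finset.univ.filter (fun j : Fin d => k ≤ (j : ℕ)), f j = ∑ j ∈ Finset.Ico k r, f j := by
  rw [Finset.sum_filter, Fin.sum_univ_eq_sum_range (fun j => if k ≤ j then f j else 0),
    ← Finset.sum_filter]
  have hIco : (Finset.range d).filter (k ≤ ·) = Finset.Ico k d := by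
    ext j
    simp [and_comm]
  rw [hIco]
  refine (Finset.sum_subset (Finset.Ico_subset_Ico_right hrd) fun j hj hjr => hf j ?_).symm
  simp only [Finset.mem_Ico] at hj hjr
  omega

section LinearAlgebra

variable {N d : ℕ}

theorem frobSq_nonneg (M : Matrix (Fin N) (Fin d) ℝ) : 0 ≤ frobSq M :=
  Finset.sum_nonneg fun _ _ => Finset.sum_nonneg fun _ _ => sq_nonneg _

theorem frobSq_pos {M : Matrix (Fin N) (Fin d) ℝ} (hM : M ≠ 0) : 0 < frobSq M := by
  obtain ⟨a, i, hai⟩ : ∃ a i, M a i ≠ 0 := by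
    by_contra! h
    exact hM (Matrix.ext h)
  exact Finset.sum_pos' (fun _ _ => Finset.sum_nonneg fun _ _ => sq_nonneg _)
    ⟨a, Finset.mem_univ _, Finset.sum_pos' (fun _ _ => sq_nonneg _)
      ⟨i, Finset.mem_univ _, by positivity⟩⟩

theorem frobSq_eq_trace (M : Matrix (Fin N) (Fin d) ℝ) : frobSq M = (M * Mᵀ).trace := by
  simp [frobSq, Matrix.trace, Matrix.mul_apply, sq]

theorem frobSq_mul_transpose {V : Matrix (Fin d) (Fin d) ℝ} (hV : V * Vᵀ = 1)
    (M : Matrix (Fin N) (Fin d) ℝ) : frobSq (M * Vᵀ) = frobSq M := by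
  have hV' : Vᵀ * V = 1 := mul_eq_one_comm.mp hV
  rw [frobSq_eq_trace, frobSq_eq_trace, Matrix.transpose_mul, Matrix.transpose_transpose,
    Matrix.mul_assoc, ← Matrix.mul_assoc Vᵀ, hV', Matrix.one_mul]

theorem mul_eq_submatrix_mul_submatrix {m n o R : Type*} [Fintype n] [NonUnitalNonAssocSemiring R]
    (A : Matrix m n R) (B : Matrix n o R) (S : Finset n) (hB : ∀ i ∉ S, ∀ j, B i j = 0) :
    A * B = A.submatrix id ((↑) : S → n) * B.submatrix ((↑) : S → n) id := by
  ext a j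
  simp only [Matrix.mul_apply, Matrix.submatrix_apply, id]
  rw [Finset.sum_coe_sort S fun i => A a i * B i j]
  exact (Finset.sum_subset (Finset.subset_univ S) fun i _ hi => by simp [hB i hi]).symm

theorem sum_sq_mulVec_of_eigen {M : Matrix (Fin N) (Fin d) ℝ} {w : Fin d → ℝ} {μ : ℝ}
    (hw : w ⬝ᵥ w = 1) (hμ : (Mᵀ * M) *ᵥ w = μ • w) : ∑ a, (M *ᵥ w) a ^ 2 = μ := by
  have h : (M *ᵥ w) ⬝ᵥ (M *ᵥ w) = w ⬝ᵥ ((Mᵀ * M) *ᵥ w) := by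
    rw [← Matrix.mulVec_mulVec, Matrix.dotProduct_mulVec, ← Matrix.mulVec_transpose,
      dotProduct_comm]
  rw [hμ, dotProduct_smul, hw, smul_eq_mul, mul_one] at h
  simpa [dotProduct, sq] using h

end LinearAlgebra

section LossK

variable {N d : ℕ} (X : Matrix (Fin N) (Fin d) ℝ) (k : ℕ) (S : Finset (Fin d))

theorem lossK_le {B : Matrix S (Fin d) ℝ} (hB : B.rank ≤ k) :
    lossK X k S ≤ frobSq (X - X.submatrix id (fun t : S => (t : Fin d)) * B) :=
  csInf_le ⟨0, by rintro _ ⟨B, _, rfl⟩; exact frobSq_nonneg _⟩ ⟨B, hB, rfl⟩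

theorem lossK_le_frobSq : lossK X k S ≤ frobSq X := by
  simpa using lossK_le X k S (B := 0) (by simp)

theorem lossK_le_sum_sq_add_sum_sq_sub {v : Fin d → Fin d → ℝ}
    (hv : ∀ i j, v i ⬝ᵥ v j = if i = j then 1 else 0) (C : Matrix S (Fin d) ℝ) :
    lossK X k S ≤ ∑ j ∈ Finset.univ.filter (fun j : Fin d => k ≤ j), ∑ a, (X *ᵥ v j) a ^ 2 +
      ∑ j ∈ Finset.univ.filter (fun j : Fin d => (j : ℕ) < k),
        ∑ a, ((X *ᵥ v j) a - (X.submatrix id (fun t : S => (t : Fin d)) * C) a j) ^ 2 := by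
  set V : Matrix (Fin d) (Fin d) ℝ := of v
  have hV : V * Vᵀ = 1 := by
    ext i j
    simpa [V, Matrix.mul_apply, Matrix.one_apply, dotProduct] using hv i j
  -- witness `B = C D V`: in the basis `v`, `X_S B` keeps the first `k` columns of `X_S C`
  set D : Matrix (Fin d) (Fin d) ℝ := diagonal fun j => if (j : ℕ) < k then 1 else 0
  have hrank : (C * D * V).rank ≤ k :=
    calc (C * D * V).rank ≤ D.rank := (rank_mul_le_left _ _).trans (rank_mul_le_right _ _)
      _ = Fintype.card {j : Fin d // (j : ℕ) < k} := by
        rw [rank_diagonal]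
        exact Fintype.card_congr (Equiv.subtypeEquivRight fun j => by simp)
      _ ≤ k := by
        rw [Fintype.card_subtype, Fin.card_filter_val_lt]
        exact min_le_right _ _
  have hres : (X - X.submatrix id (fun t : S => (t : Fin d)) * (C * D * V)) * Vᵀ =
      X * Vᵀ - X.submatrix id (fun t : S => (t : Fin d)) * C * D := by
    simp only [Matrix.sub_mul, Matrix.mul_assoc, hV, Matrix.mul_one]
  have hentry (a : Fin N) (j : Fin d) :
      (X * Vᵀ - X.submatrix id (fun t : S => (t : Fin d)) * C * D) a j =
        (X *ᵥ v j) a - if (j : ℕ) < k then (X.submatrix id (fun t : S => (t : Fin d)) * C) a j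
          else 0 := by
    rw [Matrix.sub_apply, Matrix.mul_diagonal, mul_ite, mul_one, mul_zero]
    simp [V, Matrix.mul_apply, Matrix.mulVec, dotProduct]
  refine (lossK_le X k S hrank).trans (le_of_eq ?_)
  rw [← frobSq_mul_transpose hV, hres, frobSq, Finset.sum_comm,
    ← Finset.sum_filter_add_sum_filter_not Finset.univ (fun j : Fin d => (j : ℕ) < k), add_comm]
  congr 1
  · simp only [not_lt]
    refine Finset.sum_congr rfl fun j hj => ?_
    simp [hentry, not_lt.mpr (Finset.mem_filter.mp hj).2]
  · refine Finset.sum_congr rfl fun j hj => ?_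
    simp [hentry, (Finset.mem_filter.mp hj).2]

end LossK

section LengthSquared

variable {N d : ℕ} (X : Matrix (Fin N) (Fin d) ℝ)

def lengthSquaredProb (i : Fin d) : ℝ := (∑ a, X a i ^ 2) / frobSq X

theorem lengthSquaredProb_nonneg (i : Fin d) : 0 ≤ lengthSquaredProb X i :=
  div_nonneg (Finset.sum_nonneg fun _ _ => sq_nonneg _) (frobSq_nonneg X)

theorem sum_lengthSquaredProb (hX : X ≠ 0) : ∑ i, lengthSquaredProb X i = 1 := by
  simp only [lengthSquaredProb]
  rw [← Finset.sum_div, Finset.sum_comm]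
  exact div_self (frobSq_pos hX).ne'

theorem eq_zero_of_lengthSquaredProb_eq_zero {i : Fin d} (hi : lengthSquaredProb X i = 0)
    (a : Fin N) : X a i = 0 := by
  by_cases hX : X = 0
  · simp [hX]
  rcases div_eq_zero_iff.mp hi with hcol | hF
  · exact pow_eq_zero_iff two_ne_zero |>.mp <|
      (Finset.sum_eq_zero_iff_of_nonneg fun _ _ => sq_nonneg _).mp hcol a (Finset.mem_univ a)
  · exact absurd hF (frobSq_pos hX).ne'

theorem sum_lengthSquaredProb_mul_div (a : Fin N) (c : Fin d → ℝ) :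
    ∑ i, lengthSquaredProb X i * (X a i * c i / lengthSquaredProb X i) = ∑ i, X a i * c i := by
  refine Finset.sum_congr rfl fun i _ => ?_
  -- where `p i = 0` the column vanishes, so the junk value `x / 0 = 0` does no harm
  by_cases hi : lengthSquaredProb X i = 0
  · simp [hi, eq_zero_of_lengthSquaredProb_eq_zero X hi a]
  · field_simp

theorem sum_sum_lengthSquaredProb_mul_sq_div_le (c : Fin d → ℝ) :
    ∑ a, ∑ i, lengthSquaredProb X i * (X a i * c i / lengthSquaredProb X i) ^ 2 ≤
      (∑ i, c i ^ 2) * frobSq X := by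
  rw [Finset.sum_comm, Finset.sum_mul]
  refine Finset.sum_le_sum fun i _ => ?_
  by_cases hi : lengthSquaredProb X i = 0
  · simp only [hi, zero_mul, Finset.sum_const_zero]
    exact mul_nonneg (sq_nonneg _) (frobSq_nonneg X)
  have hF : frobSq X ≠ 0 := fun hF => hi (by simp [lengthSquaredProb, hF])
  have hcol : ∑ a, X a i ^ 2 = lengthSquaredProb X i * frobSq X := by
    rw [lengthSquaredProb, div_mul_cancel₀ _ hF]
  refine le_of_eq ?_
  calc ∑ a, lengthSquaredProb X i * (X a i * c i / lengthSquaredProb X i) ^ 2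
      = c i ^ 2 / lengthSquaredProb X i * ∑ a, X a i ^ 2 := by
        rw [Finset.mul_sum]
        exact Finset.sum_congr rfl fun a _ => by field_simp
    _ = c i ^ 2 * frobSq X := by rw [hcol]; field_simp

end LengthSquared

section Estimator

variable {N d : ℕ} (X : Matrix (Fin N) (Fin d) ℝ) (v : Fin d → Fin d → ℝ) (k : ℕ) {n : ℕ}

def sampleEstimate (α : Fin n → Fin d) : Matrix (Fin N) (Fin d) ℝ :=
  of fun a j => (n : ℝ)⁻¹ * ∑ t, X a (α t) * v j (α t) / lengthSquaredProb X (α t)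

def sampleDeviation (α : Fin n → Fin d) : ℝ :=
  ∑ j ∈ Finset.univ.filter (fun j : Fin d => (j : ℕ) < k),
    ∑ a, ((X *ᵥ v j) a - sampleEstimate X v α a j) ^ 2

theorem exists_sampleEstimate_eq_submatrix_mul {S : Finset (Fin d)} {α : Fin n → Fin d}
    (hα : ∀ t, α t ∈ S) :
    ∃ C : Matrix S (Fin d) ℝ,
      sampleEstimate X v α = X.submatrix id (fun t : S => (t : Fin d)) * C := by
  let Q : Matrix (Fin d) (Fin d) ℝ := of fun i j =>
    (n : ℝ)⁻¹ * ∑ t, if α t = i then v j i / lengthSquaredProb X i else 0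
  have hQ : sampleEstimate X v α = X * Q := by
    ext a j
    simp only [sampleEstimate, Q, of_apply, Matrix.mul_apply, Finset.mul_sum, mul_ite, mul_zero]
    rw [Finset.sum_comm]
    refine Finset.sum_congr rfl fun t _ => ?_
    rw [Finset.sum_ite_eq]
    simp only [Finset.mem_univ, if_true]
    ring
  refine ⟨Q.submatrix (fun t : S => (t : Fin d)) id, hQ.trans ?_⟩
  refine mul_eq_submatrix_mul_submatrix X Q S fun i hi j => ?_
  simp only [Q, of_apply]
  rw [Finset.sum_eq_zero fun t _ => if_neg fun (h : α t = i) => hi (h ▸ hα t), mul_zero]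

theorem lossK_le_sum_Ico_add_sampleDeviation {r : ℕ} {σ : ℕ → ℝ}
    (hv : ∀ i j, v i ⬝ᵥ v j = if i = j then 1 else 0)
    (hv_eig : ∀ j : Fin d, (Xᵀ * X) *ᵥ v j = (σ (j : ℕ) ^ 2) • v j)
    (hσ : ∀ j, r ≤ j → σ j = 0) (hrd : r ≤ d) {S : Finset (Fin d)} {α : Fin n → Fin d}
    (hα : ∀ t, α t ∈ S) :
    lossK X k S ≤ ∑ j ∈ Finset.Ico k r, σ j ^ 2 + sampleDeviation X v k α := by
  obtain ⟨C, hC⟩ := exists_sampleEstimate_eq_submatrix_mul X v hα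
  have htail : ∑ j ∈ Finset.univ.filter (fun j : Fin d => k ≤ (j : ℕ)), ∑ a, (X *ᵥ v j) a ^ 2 =
      ∑ j ∈ Finset.Ico k r, σ j ^ 2 := by
    rw [← sum_filter_le_eq_sum_Ico k hrd (f := fun j => σ j ^ 2) fun j hj => by simp [hσ j hj]]
    exact Finset.sum_congr rfl fun j _ => sum_sq_mulVec_of_eigen (by simpa using hv j j) (hv_eig j)
  simpa only [sampleDeviation, hC, htail] using lossK_le_sum_sq_add_sum_sq_sub X k S hv C

theorem sum_prod_mul_sampleDeviation_le (hX : X ≠ 0)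
    (hv : ∀ i j, v i ⬝ᵥ v j = if i = j then 1 else 0) (hn : 0 < n) :
    ∑ α : Fin n → Fin d, (∏ t, lengthSquaredProb X (α t)) * sampleDeviation X v k α ≤
      k * frobSq X / n := by
  set p := lengthSquaredProb X
  have hcoord (j : Fin d) (a : Fin N) :
      ∑ α : Fin n → Fin d, (∏ t, p (α t)) * ((X *ᵥ v j) a - sampleEstimate X v α a j) ^ 2 ≤
        (n : ℝ)⁻¹ * ∑ i, p i * (X a i * v j i / p i) ^ 2 := by
    have hmean : (X *ᵥ v j) a = ∑ i, p i * (X a i * v j i / p i) :=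
      (sum_lengthSquaredProb_mul_div X a (v j)).symm
    have := sum_prod_apply_mul_sampleMean_sub_sq_le p (sum_lengthSquaredProb X hX) hn
      fun i => X a i * v j i / p i
    simpa [hmean, sampleEstimate, sub_sq_comm] using this
  have hcol (j : Fin d) :
      ∑ a, (n : ℝ)⁻¹ * ∑ i, p i * (X a i * v j i / p i) ^ 2 ≤ (n : ℝ)⁻¹ * frobSq X := by
    have hunit : ∑ i, v j i ^ 2 = 1 := by simpa [dotProduct, sq] using hv j j
    rw [← Finset.mul_sum]
    gcongr
    simpa [hunit] using sum_sum_lengthSquaredProb_mul_sq_div_le X (v j)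
  calc ∑ α : Fin n → Fin d, (∏ t, p (α t)) * sampleDeviation X v k α
      = ∑ j ∈ Finset.univ.filter (fun j : Fin d => (j : ℕ) < k), ∑ a,
          ∑ α : Fin n → Fin d, (∏ t, p (α t)) * ((X *ᵥ v j) a - sampleEstimate X v α a j) ^ 2 := by
        simp only [sampleDeviation, Finset.mul_sum]
        rw [Finset.sum_comm]
        exact Finset.sum_congr rfl fun j _ => Finset.sum_comm
    _ ≤ ∑ j ∈ Finset.univ.filter (fun j : Fin d => (j : ℕ) < k), (n : ℝ)⁻¹ * frobSq X :=
        Finset.sum_le_sum fun j _ => (Finset.sum_le_sum fun a _ => hcoord j a).trans (hcol j)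
    _ ≤ k * ((n : ℝ)⁻¹ * frobSq X) := by
        rw [Finset.sum_const, nsmul_eq_mul, Fin.card_filter_val_lt]
        exact mul_le_mul_of_nonneg_right (by exact_mod_cast min_le_right d k)
          (mul_nonneg (by positivity) (frobSq_nonneg X))
    _ = k * frobSq X / n := by ring

theorem sampleDeviation_nonneg (α : Fin n → Fin d) : 0 ≤ sampleDeviation X v k α :=
  Finset.sum_nonneg fun _ _ => Finset.sum_nonneg fun _ _ => sq_nonneg _

theorem sum_filter_le_sampleDeviation_le_half (hX : X ≠ 0)
    (hv : ∀ i j, v i ⬝ᵥ v j = if i = j then 1 else 0) (hn : 0 < n) (hk : 0 < k) :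
    ∑ α ∈ Finset.univ.filter (fun α : Fin n → Fin d =>
        2 * k / n * frobSq X ≤ sampleDeviation X v k α),
      ∏ t, lengthSquaredProb X (α t) ≤ 1 / 2 := by
  have hc : 0 < 2 * k / n * frobSq X := by
    have := frobSq_pos hX
    positivity
  have hmarkov := mul_sum_filter_le_sum_mul
    (w := fun α : Fin n → Fin d => ∏ t, lengthSquaredProb X (α t))
    (fun α => Finset.prod_nonneg fun t _ => lengthSquaredProb_nonneg X (α t))
    (sampleDeviation_nonneg X v k) (2 * k / n * frobSq X)
  have hexp := sum_prod_mul_sampleDeviation_le X v k hX hv hn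
  have : 2 * k / n * frobSq X = 2 * (k * frobSq X / n) := by ring
  rw [this] at hmarkov hc ⊢
  nlinarith

theorem sum_filter_lt_lossK_le_half_pow {r s m : ℕ} {σ : ℕ → ℝ} (hX : X ≠ 0)
    (hv : ∀ i j, v i ⬝ᵥ v j = if i = j then 1 else 0)
    (hv_eig : ∀ j : Fin d, (Xᵀ * X) *ᵥ v j = (σ (j : ℕ) ^ 2) • v j)
    (hσ : ∀ j, r ≤ j → σ j = 0) (hrd : r ≤ d) (hk : 0 < k) (hn : 0 < n) (hmn : m * n ≤ s) :
    ∑ ω ∈ Finset.univ.filter (fun ω : Fin s → Fin d =>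
        ∑ j ∈ Finset.Ico k r, σ j ^ 2 + 2 * k / n * frobSq X <
          lossK X k (Finset.image ω Finset.univ)),
      ∏ i, lengthSquaredProb X (ω i) ≤ (1 / 2) ^ m := by
  let φ : Fin m × Fin n → Fin s := fun gt => Fin.castLE hmn (finProdFinEquiv gt)
  have hφ : Function.Injective φ := (Fin.castLE_injective hmn).comp finProdFinEquiv.injective
  set c := 2 * k / n * frobSq X
  have hsub : Finset.univ.filter (fun ω : Fin s → Fin d =>
        ∑ j ∈ Finset.Ico k r, σ j ^ 2 + c < lossK X k (Finset.image ω Finset.univ)) ⊆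
      Finset.univ.filter (fun ω : Fin s → Fin d =>
        ∀ g, c ≤ sampleDeviation X v k fun t => ω (φ (g, t))) := by
    intro ω hω
    simp only [Finset.mem_filter, Finset.mem_univ, true_and] at hω ⊢
    intro g
    by_contra! hg
    have := lossK_le_sum_Ico_add_sampleDeviation X v k hv hv_eig hσ hrd
      (α := fun t => ω (φ (g, t))) fun t => Finset.mem_image_of_mem ω (Finset.mem_univ _)
    linarith
  have hw {τ : Type} [Fintype τ] (ω : τ → Fin d) : 0 ≤ ∏ t, lengthSquaredProb X (ω t) :=
    Finset.prod_nonneg fun t _ => lengthSquaredProb_nonneg X (ω t)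
  calc _ ≤ _ := Finset.sum_le_sum_of_subset_of_nonneg hsub fun ω _ _ => hw ω
    _ = (∑ α ∈ Finset.univ.filter (fun α : Fin n → Fin d => c ≤ sampleDeviation X v k α),
          ∏ t, lengthSquaredProb X (α t)) ^ m := by
        convert sum_filter_forall_comp_prod_eq_pow _ (sum_lengthSquaredProb X hX) hφ
          fun α : Fin n → Fin d => c ≤ sampleDeviation X v k α
        exact (Fintype.card_fin m).symm
    _ ≤ (1 / 2) ^ m := pow_le_pow_left₀ (Finset.sum_nonneg fun α _ => hw α)
        (sum_filter_le_sampleDeviation_le_half X v k hX hv hn hk) m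

end Estimator

theorem exists_half_pow_le {δ : ℝ} (hδ0 : 0 < δ) (hδ1 : δ < 1) :
    ∃ m : ℕ, 0 < m ∧ (1 / 2 : ℝ) ^ m ≤ δ ∧ (m : ℝ) ≤ 8 * Real.log (2 / δ) := by
  set b := Real.logb 2 δ⁻¹ with hb_def
  have hb : 0 < b := Real.logb_pos one_lt_two (one_lt_inv₀ hδ0 |>.mpr hδ1)
  refine ⟨⌈b⌉₊, Nat.ceil_pos.mpr hb, ?_, ?_⟩
  · rw [one_div, inv_pow, inv_le_comm₀ (by positivity) hδ0]
    calc δ⁻¹ = 2 ^ b := (Real.rpow_logb two_pos (by norm_num) (inv_pos.mpr hδ0)).symm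
      _ ≤ 2 ^ (⌈b⌉₊ : ℝ) := Real.rpow_le_rpow_of_exponent_le one_le_two (Nat.le_ceil b)
      _ = 2 ^ ⌈b⌉₊ := Real.rpow_natCast 2 _
  · -- `⌈b⌉₊ < b + 1 = log (2/δ) / log 2` and `log 2 > 1/8`
    have hlog2 := Real.log_two_gt_d9
    have hL : Real.log (2 / δ) = (b + 1) * Real.log 2 := by
      rw [div_eq_mul_inv, Real.log_mul two_ne_zero (inv_ne_zero hδ0.ne'), add_mul, one_mul,
        hb_def, ← Real.log_div_log, div_mul_cancel₀ _ (by positivity), add_comm]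
    rw [hL]
    nlinarith [Nat.ceil_lt_add_one hb.le]

theorem exists_blocks {δ : ℝ} (hδ0 : 0 < δ) (hδ1 : δ < 1) {k s : ℕ} (hk : 0 < k) (hs : 0 < s)
    (hsmall : 2 * (1 + √(8 * Real.log (2 / δ))) * √(k / s) < 1) :
    ∃ m n : ℕ, 0 < n ∧ m * n ≤ s ∧ (1 / 2 : ℝ) ^ m ≤ δ ∧
      2 * k / n ≤ 2 * (1 + √(8 * Real.log (2 / δ))) * √(k / s) := by
  obtain ⟨m, hm, hmδ, hmL⟩ := exists_half_pow_le hδ0 hδ1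
  set W := 1 + √(8 * Real.log (2 / δ))
  set x := √((k : ℝ) / s)
  have hW : (m : ℝ) ≤ W ^ 2 := by
    have : 0 ≤ 8 * Real.log (2 / δ) := hmL.trans' (Nat.cast_nonneg m)
    nlinarith [Real.sq_sqrt this, Real.sqrt_nonneg (8 * Real.log (2 / δ))]
  have hW0 : 0 ≤ W := by positivity
  have hx0 : 0 ≤ x := Real.sqrt_nonneg _
  have hs' : (0 : ℝ) < s := by exact_mod_cast hs
  have hxs : x ^ 2 * s = k := by
    rw [Real.sq_sqrt (by positivity), div_mul_cancel₀ _ hs'.ne']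
  have hsbig : 4 * W ^ 2 * k < s := by
    have h2Wx : (2 * W * x) ^ 2 < 1 := by
      nlinarith [mul_nonneg (mul_nonneg zero_le_two hW0) hx0]
    calc 4 * W ^ 2 * k = (2 * W * x) ^ 2 * s := by rw [← hxs]; ring
      _ < (s : ℝ) := by nlinarith
  have hms : m ≤ s := by
    have : (1 : ℝ) ≤ k := by exact_mod_cast hk
    exact_mod_cast (by nlinarith : (m : ℝ) ≤ s)
  refine ⟨m, s / m, Nat.div_pos hms hm, Nat.mul_div_le s m, hmδ, ?_⟩
  have hn : (1 : ℝ) ≤ (s / m : ℕ) := by exact_mod_cast Nat.div_pos hms hm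
  have hsn : (s : ℝ) < 2 * m * (s / m : ℕ) := by
    have : s < m * (s / m + 1) := Nat.lt_mul_div_succ s hm
    have : (s : ℝ) < m * ((s / m : ℕ) + 1) := by exact_mod_cast this
    nlinarith
  -- `k = x² s < 2 m n x²` and `2 m x ≤ 2 W² x ≤ W`
  have hmx : 2 * m * x ≤ W := by nlinarith [mul_nonneg hW0 hx0]
  rw [div_le_iff₀ (by positivity)]
  nlinarith [mul_nonneg hx0 (by positivity : (0 : ℝ) ≤ (s / m : ℕ))]

theorem length_squared_sampling_bound_general {N d : ℕ} (X : Matrix (Fin N) (Fin d) ℝ)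
    (r k : ℕ) (hr : 0 < r) (hrank : X.rank = r)
    (σ : ℕ → ℝ) (v : Fin d → Fin d → ℝ)
    (hσ_zero : ∀ j : ℕ, r ≤ j → σ j = 0)
    (hv_orth : ∀ i j, v i ⬝ᵥ v j = if i = j then (1 : ℝ) else 0)
    (hv_eig : ∀ j : Fin d, (Xᵀ * X) *ᵥ v j = (σ (j : ℕ) ^ 2) • v j)
    (δ : ℝ) (hδ : δ ∈ Set.Ioo (0 : ℝ) 1)
    (s : ℕ) (hs : 0 < s)
    (p : Fin d → ℝ) (hp : ∀ i, p i = (∑ a, X a i ^ 2) / frobSq X) :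
    (1 : ℝ) - δ ≤
      ∑ ω ∈ Finset.univ.filter (fun ω : Fin s → Fin d =>
          lossK X k (Finset.image ω Finset.univ)
            ≤ (∑ j ∈ Finset.Ico k r, σ j ^ 2) +
              2 * (1 + Real.sqrt (8 * Real.log (2 / δ))) *
                Real.sqrt ((k : ℝ) / s) * frobSq X),
        ∏ i, p (ω i) := by
  obtain ⟨hδ0, hδ1⟩ := hδ
  obtain rfl : p = lengthSquaredProb X := funext hp
  have hX : X ≠ 0 := by
    rintro rfl
    rw [Matrix.rank_zero] at hrank
    omega
  have hrd : r ≤ d := hrank ▸ X.rank_le_width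
  refine one_sub_le_sum_filter (sum_prod_apply_eq_one _ (sum_lengthSquaredProb X hX)) _ ?_
  by_cases htriv : k = 0 ∨ 1 ≤ 2 * (1 + √(8 * Real.log (2 / δ))) * √((k : ℝ) / s)
  · refine le_of_eq_of_le (Finset.sum_eq_zero fun ω hω => absurd ?_ (Finset.mem_filter.mp hω).2)
      hδ0.le
    have htail : 0 ≤ ∑ j ∈ Finset.Ico k r, σ j ^ 2 := Finset.sum_nonneg fun _ _ => sq_nonneg _
    rcases htriv with rfl | hlarge
    · simpa [sampleDeviation] using lossK_le_sum_Ico_add_sampleDeviation X v 0 hv_orth hv_eig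
        hσ_zero hrd (α := ω) fun t => Finset.mem_image_of_mem ω (Finset.mem_univ t)
    · have := frobSq_nonneg X
      exact (lossK_le_frobSq X k _).trans (by nlinarith)
  push Not at htriv
  have hk := Nat.pos_of_ne_zero htriv.1
  obtain ⟨m, n, hn, hmn, hmδ, hc⟩ := exists_blocks hδ0 hδ1 hk hs htriv.2
  refine le_trans ?_ ((sum_filter_lt_lossK_le_half_pow X v k hX hv_orth hv_eig hσ_zero hrd hk hn
    hmn).trans hmδ)
  refine Finset.sum_le_sum_of_subset_of_nonneg (fun ω hω => ?_)
    fun ω _ _ => Finset.prod_nonneg fun i _ => lengthSquaredProb_nonneg X (ω i)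
  simp only [Finset.mem_filter, Finset.mem_univ, true_and, not_le] at hω ⊢
  have := mul_le_mul_of_nonneg_right hc (frobSq_nonneg X)
  linarith

/-- **Length-squared importance sampling** (Drineas–Frieze–Kannan–Vempala–Vinay, Thm 3).
Sampling `s` column indices i.i.d. with probability proportional to squared column norms,
with probability at least `1 − δ`,
`𝓛_k(S) ≤ ∑_{j>k} σ_j² + 2(1+√(8 log(2/δ)))√(k/s)·‖X‖_Fr²`. -/
theorem length_squared_sampling_bound {N d : ℕ} (X : Matrix (Fin N) (Fin d) ℝ)
    (r k : ℕ) (hr : 0 < r) (hk : k ≤ r) (hrank : X.rank = r)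
    (σ : ℕ → ℝ) (v : Fin d → Fin d → ℝ)
    (hσ_anti : ∀ i j : ℕ, i ≤ j → σ j ≤ σ i)
    (hσ_pos : ∀ j : ℕ, j < r → 0 < σ j)
    (hσ_zero : ∀ j : ℕ, r ≤ j → σ j = 0)
    (hv_orth : ∀ i j, v i ⬝ᵥ v j = if i = j then (1 : ℝ) else 0)
    (hv_eig : ∀ j : Fin d, (Xᵀ * X) *ᵥ v j = (σ (j : ℕ) ^ 2) • v j)
    (δ : ℝ) (hδ : δ ∈ Set.Ioo (0 : ℝ) 1)
    (s : ℕ) (hs : 0 < s)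
    (p : Fin d → ℝ) (hp : ∀ i, p i = (∑ a, X a i ^ 2) / frobSq X) :
    (1 : ℝ) - δ ≤
      ∑ ω ∈ Finset.univ.filter (fun ω : Fin s → Fin d =>
          lossK X k (Finset.image ω Finset.univ)
            ≤ (∑ j ∈ Finset.Ico k r, σ j ^ 2) +
              2 * (1 + Real.sqrt (8 * Real.log (2 / δ))) *
                Real.sqrt ((k : ℝ) / s) * frobSq X),
        ∏ i, p (ω i) :=
  length_squared_sampling_bound_general X r k hr hrank σ v hσ_zero hv_orth hv_eig δ hδ s hs p hp

end
end

section
/- Let K, M be positive integers, let G_1,...,G_M be a partition of {1,...,K} into nonempty pairwise disjoint sets, and let v* ∈ ℝ^M. Let S_DPP be a random subset of {1,...,K} such that P( i ∈ S_DPP and j ∈ S_DPP ) = 0 whenever i ≠ j lie in the same group G_m. Let S be any random subset of {1,...,K} with the same marginal inclusion probabilities, i.e., P(i ∈ S) = P(i ∈ S_DPP) for all i ∈ {1,...,K}. Then E[ Σ_{m : G_m ∩ S = ∅} (v*_m)² ] ≥ E[ Σ_{m : G_m ∩ S_DPP = ∅} (v*_m)² ]. -/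
set_option maxRecDepth 10000


open scoped Classical

/-- **DPP pruning is optimal among samplers with the same marginals.** If `S_DPP` never
keeps two neurons of the same group and `S` is any random subset with the same marginal
inclusion probabilities, then the expected pruned-and-reweighted generalization error
`E[Σ_{m : G_m ∩ S = ∅} (v*_m)²]` of `S` is at least that of `S_DPP`. -/
theorem dpp_pruning_optimal
    (K M : ℕ)
    (G : Fin M → Finset (Fin K))
    (hGne : ∀ m, (G m).Nonempty)
    (hGdisj : ∀ m m', m ≠ m' → Disjoint (G m) (G m'))
    (hGcover : ∀ i, ∃ m, i ∈ G m)
    (vs : Fin M → ℝ)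
    (μD μ : Finset (Fin K) → ℝ)
    (hμD0 : ∀ A, 0 ≤ μD A) (hμD1 : (∑ A : Finset (Fin K), μD A) = 1)
    (hμ0 : ∀ A, 0 ≤ μ A) (hμ1 : (∑ A : Finset (Fin K), μ A) = 1)
    (hpair : ∀ m : Fin M, ∀ i ∈ G m, ∀ j ∈ G m, i ≠ j →
      ∑ A ∈ Finset.univ.filter (fun A : Finset (Fin K) => i ∈ A ∧ j ∈ A), μD A = 0)
    (hmarg : ∀ i : Fin K,
      ∑ A ∈ Finset.univ.filter (fun A : Finset (Fin K) => i ∈ A), μ A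
        = ∑ A ∈ Finset.univ.filter (fun A : Finset (Fin K) => i ∈ A), μD A) :
    (∑ A : Finset (Fin K), μD A *
        ∑ m ∈ Finset.univ.filter (fun m : Fin M => G m ∩ A = ∅), vs m ^ 2)
      ≤ ∑ A : Finset (Fin K), μ A *
          ∑ m ∈ Finset.univ.filter (fun m : Fin M => G m ∩ A = ∅), vs m ^ 2 := by
  classical
  set T : ℝ := ∑ m : Fin M, vs m ^ 2 with hT
  set g : Finset (Fin K) → ℝ :=
    fun A => ∑ m ∈ Finset.univ.filter (fun m : Fin M => ¬ (G m ∩ A = ∅)), vs m ^ 2 with hgdef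
  have hg : ∀ A : Finset (Fin K),
      (∑ m ∈ Finset.univ.filter (fun m : Fin M => G m ∩ A = ∅), vs m ^ 2)
      = T - g A := by
    intro A
    rw [eq_sub_iff_add_eq, hgdef, Finset.sum_filter_add_sum_filter_not]
  set h : Finset (Fin K) → ℝ :=
    fun A => ∑ m : Fin M, vs m ^ 2 * ((G m ∩ A).card : ℝ) with hhdef
  -- g ≤ h pointwise
  have hgh : ∀ A, g A ≤ h A := by
    intro A
    calc g A ≤ ∑ m ∈ Finset.univ.filter (fun m : Fin M => ¬ (G m ∩ A = ∅)),
          vs m ^ 2 * ((G m ∩ A).card : ℝ) := by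
          apply Finset.sum_le_sum
          intro m hm
          simp only [Finset.mem_filter] at hm
          have h1 : 1 ≤ ((G m ∩ A).card : ℝ) := by
            have := Finset.card_pos.mpr (Finset.nonempty_iff_ne_empty.mpr hm.2)
            exact_mod_cast this
          nlinarith [sq_nonneg (vs m)]
      _ ≤ h A := by
          apply Finset.sum_le_sum_of_subset_of_nonneg (Finset.filter_subset _ _)
          intro m _ _
          positivity
  -- h A = g A on the support of μD
  have hDgh : ∀ A, μD A ≠ 0 → h A = g A := by
    intro A hA
    show (∑ m : Fin M, vs m ^ 2 * ((G m ∩ A).card : ℝ))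
      = ∑ m ∈ Finset.univ.filter (fun m : Fin M => ¬ (G m ∩ A = ∅)), vs m ^ 2
    rw [← Finset.sum_filter_add_sum_filter_not Finset.univ
      (fun m : Fin M => ¬ (G m ∩ A = ∅)) (fun m => vs m ^ 2 * ((G m ∩ A).card : ℝ))]
    have hz : ∑ m ∈ Finset.univ.filter (fun m : Fin M => ¬¬ (G m ∩ A = ∅)),
        vs m ^ 2 * ((G m ∩ A).card : ℝ) = 0 := by
      apply Finset.sum_eq_zero
      intro m hm
      simp only [Finset.mem_filter, not_not] at hm
      rw [hm.2]
      simp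
    rw [hz, add_zero]
    apply Finset.sum_congr rfl
    intro m hm
    simp only [Finset.mem_filter] at hm
    have hcard : (G m ∩ A).card = 1 := by
      have h1 : 1 ≤ (G m ∩ A).card :=
        Finset.card_pos.mpr (Finset.nonempty_iff_ne_empty.mpr hm.2)
      by_contra hne
      have h2 : 1 < (G m ∩ A).card := lt_of_le_of_ne h1 (Ne.symm hne)
      obtain ⟨i, hi, j, hj, hij⟩ := Finset.one_lt_card.mp h2
      simp only [Finset.mem_inter] at hi hj
      have hzero := hpair m i hi.1 j hj.1 hij
      have : μD A = 0 := by
        have := (Finset.sum_eq_zero_iff_of_nonneg (fun A _ => hμD0 A)).mp hzero A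
          (by simp [hi.2, hj.2])
        exact this
      exact hA this
    rw [hcard]
    simp
  -- key sum-swap identity
  have key : ∀ ν : Finset (Fin K) → ℝ,
      ∑ A : Finset (Fin K), ν A * h A
      = ∑ m : Fin M, vs m ^ 2 * ∑ i ∈ G m,
          ∑ A ∈ Finset.univ.filter (fun A : Finset (Fin K) => i ∈ A), ν A := by
    intro ν
    have hterm : ∀ A : Finset (Fin K), ν A * h A
        = ∑ m : Fin M, ∑ i ∈ G m, (if i ∈ A then ν A * vs m ^ 2 else 0) := by
      intro A
      show ν A * (∑ m : Fin M, vs m ^ 2 * ((G m ∩ A).card : ℝ)) = _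
      rw [Finset.mul_sum]
      apply Finset.sum_congr rfl
      intro m _
      have hcard : ((G m ∩ A).card : ℝ) = ∑ i ∈ G m, (if i ∈ A then (1 : ℝ) else 0) := by
        rw [Finset.sum_boole, Finset.filter_mem_eq_inter]
      rw [hcard, Finset.mul_sum, Finset.mul_sum]
      apply Finset.sum_congr rfl
      intro i _
      by_cases hiA : i ∈ A <;> simp [hiA]
    calc ∑ A : Finset (Fin K), ν A * h A
        = ∑ A : Finset (Fin K), ∑ m : Fin M, ∑ i ∈ G m,
            (if i ∈ A then ν A * vs m ^ 2 else 0) :=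
          Finset.sum_congr rfl fun A _ => hterm A
      _ = ∑ m : Fin M, ∑ A : Finset (Fin K), ∑ i ∈ G m,
            (if i ∈ A then ν A * vs m ^ 2 else 0) := Finset.sum_comm
      _ = ∑ m : Fin M, ∑ i ∈ G m, ∑ A : Finset (Fin K),
            (if i ∈ A then ν A * vs m ^ 2 else 0) :=
          Finset.sum_congr rfl fun m _ => Finset.sum_comm
      _ = ∑ m : Fin M, vs m ^ 2 * ∑ i ∈ G m,
            ∑ A ∈ Finset.univ.filter (fun A : Finset (Fin K) => i ∈ A), ν A := by
          apply Finset.sum_congr rfl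
          intro m _
          rw [Finset.mul_sum]
          apply Finset.sum_congr rfl
          intro i _
          rw [Finset.sum_filter, Finset.mul_sum]
          apply Finset.sum_congr rfl
          intro A _
          by_cases hiA : i ∈ A <;> simp [hiA, mul_comm]
  -- main chain: ∑ μ g ≤ ∑ μD g
  have main : ∑ A : Finset (Fin K), μ A * g A ≤ ∑ A : Finset (Fin K), μD A * g A := by
    calc ∑ A : Finset (Fin K), μ A * g A
        ≤ ∑ A : Finset (Fin K), μ A * h A := by
          apply Finset.sum_le_sum
          intro A _
          exact mul_le_mul_of_nonneg_left (hgh A) (hμ0 A)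
      _ = ∑ m : Fin M, vs m ^ 2 * ∑ i ∈ G m,
            ∑ A ∈ Finset.univ.filter (fun A : Finset (Fin K) => i ∈ A), μ A := key μ
      _ = ∑ m : Fin M, vs m ^ 2 * ∑ i ∈ G m,
            ∑ A ∈ Finset.univ.filter (fun A : Finset (Fin K) => i ∈ A), μD A := by
          apply Finset.sum_congr rfl
          intro m _
          congr 1
          exact Finset.sum_congr rfl fun i _ => hmarg i
      _ = ∑ A : Finset (Fin K), μD A * h A := (key μD).symm
      _ = ∑ A : Finset (Fin K), μD A * g A := by
          apply Finset.sum_congr rfl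
          intro A _
          by_cases hA : μD A = 0
          · simp [hA]
          · rw [hDgh A hA]
  -- finish
  simp only [hg, mul_sub]
  rw [Finset.sum_sub_distrib, Finset.sum_sub_distrib, ← Finset.sum_mul, ← Finset.sum_mul,
    hμ1, hμD1]
  linarith [main]
end
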